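/- arXiv:math/9906154 — 2 statements merged into one kernel-verified Lean document; each statement's English description precedes it below -/
import Mathlib

section
/- For every n ≥ 3, the number of permutations of {1,…,n} that contain no (132) pattern and exactly one (123) pattern equals (n−2)·2^{n−3}, and this number is 0 for n < 3. Equivalently, Σ_{n≥0} f₁(n) zⁿ = z³/(1−2z)². -/
/-- `Avoids132 a` says the finite sequence `a` contains no (132) pattern. -/
def Avoids132 {m : ℕ} (a : Fin m → ℕ) : Prop :=
  ∀ i j k : Fin m, i < j → j < k → ¬ (a i < a k ∧ a k < a j)

/-- `count123 a` is the number of (123) patterns of `a`. -/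
def count123 {m : ℕ} (a : Fin m → ℕ) : ℕ :=
  (Finset.univ.filter (fun t : Fin m × Fin m × Fin m =>
    t.1 < t.2.1 ∧ t.2.1 < t.2.2 ∧ a t.1 < a t.2.1 ∧ a t.2.1 < a t.2.2)).card

/-- `f r n` is the number of permutations of `{1,…,n}` that contain no (132)
pattern and have exactly `r` (123) patterns. -/
noncomputable def f (r n : ℕ) : ℕ :=
  Nat.card {π : Equiv.Perm (Fin n) //
    Avoids132 (fun i => (π i : ℕ)) ∧ count123 (fun i => (π i : ℕ)) = r}

namespace P16

open Equiv Finset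

variable {n : ℕ}

lemma coe_sa (p : Fin (n+1)) (x : Fin n) :
    ((p.succAbove x : Fin (n+1)) : ℕ) = if (x:ℕ) < (p:ℕ) then (x:ℕ) else (x:ℕ)+1 := by
  rcases lt_or_ge (x.castSucc) p with h | h
  · rw [Fin.succAbove_of_castSucc_lt _ _ h]
    simp [Fin.lt_def] at h ⊢
    simp [h]
  · rw [Fin.succAbove_of_le_castSucc _ _ h]
    have h' : (p:ℕ) ≤ (x:ℕ) := by simpa [Fin.le_def, Fin.coe_castSucc] using h
    rw [Fin.val_succ, if_neg (by omega)]

@[simp] lemma sa_lt_sa (p : Fin (n+1)) (x y : Fin n) :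
    p.succAbove x < p.succAbove y ↔ x < y := Fin.succAbove_lt_succAbove_iff

@[simp] lemma p_lt_sa (p : Fin (n+1)) (x : Fin n) :
    p < p.succAbove x ↔ (p:ℕ) ≤ (x:ℕ) := by
  rw [Fin.lt_def, coe_sa]; split_ifs <;> omega

@[simp] lemma sa_lt_p (p : Fin (n+1)) (x : Fin n) :
    p.succAbove x < p ↔ (x:ℕ) < (p:ℕ) := by
  rw [Fin.lt_def, coe_sa]; split_ifs <;> omega

def glue (p : Fin (n+1)) (σ : Perm (Fin n)) : Perm (Fin (n+1)) :=
  ((finSuccEquiv n).trans ((Equiv.optionCongr σ).trans (finSuccEquiv' p).symm))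

@[simp] lemma glue_zero (p : Fin (n+1)) (σ : Perm (Fin n)) : glue p σ 0 = p := by
  simp [glue]

@[simp] lemma glue_succ (p : Fin (n+1)) (σ : Perm (Fin n)) (i : Fin n) :
    glue p σ i.succ = p.succAbove (σ i) := by
  simp [glue]

lemma glue_bijective :
    Function.Bijective (fun x : Fin (n+1) × Perm (Fin n) => glue x.1 x.2) := by
  rw [Fintype.bijective_iff_injective_and_card]
  constructor
  · rintro ⟨p, σ⟩ ⟨q, τ⟩ h
    simp only at h
    have h0 : p = q := by
      have := congrFun (congrArg (fun e : Perm (Fin (n+1)) => (e : Fin (n+1) → Fin (n+1))) h) 0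
      simpa using this
    subst h0
    have : σ = τ := by
      ext i
      have := congrFun (congrArg (fun e : Perm (Fin (n+1)) => (e : Fin (n+1) → Fin (n+1))) h) i.succ
      simp only [glue_succ] at this
      exact congrArg Fin.val (Fin.succAbove_right_injective this)
    simp [this]
  · simp [Fintype.card_perm, Fintype.card_fin, Nat.factorial_succ]

noncomputable def glueE : (Fin (n+1) × Perm (Fin n)) ≃ Perm (Fin (n+1)) :=
  Equiv.ofBijective _ glue_bijective

/-- `Inc t a`: the values `≥ t` of `a` appear in increasing order. -/
def Inc (t : ℕ) {m : ℕ} (a : Fin m → ℕ) : Prop :=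
  ∀ j k : Fin m, j < k → ¬ (t ≤ a k ∧ a k < a j)

def cross (p : Fin (n+1)) (σ : Perm (Fin n)) : ℕ :=
  (univ.filter (fun q : Fin n × Fin n =>
    q.1 < q.2 ∧ (p:ℕ) ≤ (σ q.1 : ℕ) ∧ (σ q.1 : ℕ) < (σ q.2 : ℕ))).card

lemma avoid_glue (p : Fin (n+1)) (σ : Perm (Fin n)) :
    Avoids132 (fun i => (glue p σ i : ℕ)) ↔
      (Avoids132 (fun i => (σ i : ℕ)) ∧ Inc p (fun i => (σ i : ℕ))) := by
  constructor
  · intro H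
    refine ⟨?_, ?_⟩
    · intro i j k hij hjk hc
      refine H i.succ j.succ k.succ (by simpa [Fin.succ_lt_succ_iff] using hij)
        (by simpa [Fin.succ_lt_succ_iff] using hjk) ?_
      simpa using hc
    · intro j k hjk hc
      refine H 0 j.succ k.succ (Fin.succ_pos j)
        (by simpa [Fin.succ_lt_succ_iff] using hjk) ?_
      simpa using hc
  · rintro ⟨hA, hI⟩ i j k hij hjk hc
    rcases Fin.eq_zero_or_eq_succ i with rfl | ⟨i', rfl⟩
    · obtain ⟨j', rfl⟩ := Fin.eq_succ_of_ne_zero (Fin.pos_iff_ne_zero.1 hij)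
      obtain ⟨k', rfl⟩ := Fin.eq_succ_of_ne_zero (Fin.pos_iff_ne_zero.1 (hij.trans hjk))
      simp only [glue_zero, glue_succ, Fin.val_fin_lt, p_lt_sa, sa_lt_sa] at hc
      exact hI j' k' (by simpa [Fin.succ_lt_succ_iff] using hjk)
        ⟨hc.1, by exact_mod_cast hc.2⟩
    · obtain ⟨j', rfl⟩ := Fin.eq_succ_of_ne_zero (Fin.pos_iff_ne_zero.1 ((Fin.succ_pos i').trans hij))
      obtain ⟨k', rfl⟩ := Fin.eq_succ_of_ne_zero (Fin.pos_iff_ne_zero.1 (((Fin.succ_pos i').trans hij).trans hjk))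
      simp only [glue_succ, Fin.val_fin_lt, sa_lt_sa] at hc
      exact hA i' j' k' (by simpa [Fin.succ_lt_succ_iff] using hij)
        (by simpa [Fin.succ_lt_succ_iff] using hjk)
        ⟨by exact_mod_cast hc.1, by exact_mod_cast hc.2⟩

lemma count_glue (p : Fin (n+1)) (σ : Perm (Fin n)) :
    count123 (fun i => (glue p σ i : ℕ)) = count123 (fun i => (σ i : ℕ)) + cross p σ := by
  classical
  unfold count123 cross
  rw [← Finset.card_filter_add_card_filter_not
    (p := fun t : Fin (n+1) × Fin (n+1) × Fin (n+1) => t.1 ≠ 0), Finset.filter_filter,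
    Finset.filter_filter]
  congr 1
  · refine (Finset.card_bij (fun (a : Fin n × Fin n × Fin n) _ =>
      ((a.1.succ : Fin (n+1)), a.2.1.succ, a.2.2.succ)) ?_ ?_ ?_).symm
    · rintro ⟨a1, a2, a3⟩ ha
      simp only [mem_filter, mem_univ, true_and, Fin.val_fin_lt] at ha ⊢
      simpa [Fin.succ_lt_succ_iff, Fin.succ_ne_zero] using ha
    · rintro ⟨a1, a2, a3⟩ _ ⟨b1, b2, b3⟩ _ h
      simp only [Prod.mk.injEq] at h
      simp [Fin.succ_injective _ h.1, Fin.succ_injective _ h.2.1,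
        Fin.succ_injective _ h.2.2]
    · rintro ⟨b1, b2, b3⟩ hb
      simp only [mem_filter, mem_univ, true_and, Fin.val_fin_lt] at hb
      obtain ⟨⟨h12, h23, hv1, hv2⟩, hne⟩ := hb
      obtain ⟨a1, rfl⟩ := Fin.eq_succ_of_ne_zero hne
      obtain ⟨a2, rfl⟩ := Fin.eq_succ_of_ne_zero
        (Fin.pos_iff_ne_zero.1 ((Fin.succ_pos a1).trans h12))
      obtain ⟨a3, rfl⟩ := Fin.eq_succ_of_ne_zero
        (Fin.pos_iff_ne_zero.1 (((Fin.succ_pos a1).trans h12).trans h23))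
      refine ⟨(a1, a2, a3), ?_, rfl⟩
      simp only [mem_filter, mem_univ, true_and, Fin.val_fin_lt]
      simp only [Fin.succ_lt_succ_iff, glue_succ, Fin.val_fin_lt, sa_lt_sa] at h12 h23 hv1 hv2
      exact ⟨h12, h23, hv1, hv2⟩
  · refine (Finset.card_bij (fun (q : Fin n × Fin n) _ =>
      ((0 : Fin (n+1)), q.1.succ, q.2.succ)) ?_ ?_ ?_).symm
    · rintro ⟨q1, q2⟩ hq
      simp only [mem_filter, mem_univ, true_and, Fin.val_fin_lt] at hq ⊢
      simpa [Fin.succ_lt_succ_iff, Fin.succ_pos] using hq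
    · rintro ⟨a1, a2⟩ _ ⟨b1, b2⟩ _ h
      simp only [Prod.mk.injEq] at h
      simp [Fin.succ_injective _ h.2.1, Fin.succ_injective _ h.2.2]
    · rintro ⟨b1, b2, b3⟩ hb
      simp only [mem_filter, mem_univ, true_and, Fin.val_fin_lt, not_not] at hb
      obtain ⟨⟨h12, h23, hv1, hv2⟩, h0⟩ := hb
      subst h0
      obtain ⟨a2, rfl⟩ := Fin.eq_succ_of_ne_zero (Fin.pos_iff_ne_zero.1 h12)
      obtain ⟨a3, rfl⟩ := Fin.eq_succ_of_ne_zero (Fin.pos_iff_ne_zero.1 (h12.trans h23))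
      refine ⟨(a2, a3), ?_, rfl⟩
      simp only [mem_filter, mem_univ, true_and, Fin.val_fin_lt]
      simp only [Fin.succ_lt_succ_iff, glue_succ, glue_zero, Fin.val_fin_lt,
        sa_lt_sa, p_lt_sa] at h12 h23 hv1 hv2
      exact ⟨h23, hv1, hv2⟩

lemma card_lt_pairs {α : Type*} [Fintype α] [LinearOrder α] [DecidableEq α] (T : Finset α) :
    (univ.filter (fun q : α × α => q.1 < q.2 ∧ q.1 ∈ T ∧ q.2 ∈ T)).card = T.card.choose 2 := by
  classical
  have hswap : (univ.filter (fun q : α × α => q.1 < q.2 ∧ q.1 ∈ T ∧ q.2 ∈ T)).card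
      = (univ.filter (fun q : α × α => q.2 < q.1 ∧ q.1 ∈ T ∧ q.2 ∈ T)).card := by
    apply Finset.card_bij (fun q _ => Prod.swap q)
    · rintro ⟨a, b⟩ hq
      simp only [mem_filter, mem_univ, true_and] at hq ⊢
      tauto
    · rintro ⟨a, b⟩ _ ⟨c, d⟩ _ h
      simpa [Prod.ext_iff, and_comm] using h
    · rintro ⟨a, b⟩ hb
      refine ⟨(b, a), ?_, rfl⟩
      simp only [mem_filter, mem_univ, true_and] at hb ⊢
      tauto
  have hunion : (univ.filter (fun q : α × α => q.1 < q.2 ∧ q.1 ∈ T ∧ q.2 ∈ T)).card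
      + (univ.filter (fun q : α × α => q.2 < q.1 ∧ q.1 ∈ T ∧ q.2 ∈ T)).card
      = T.offDiag.card := by
    rw [← Finset.card_union_of_disjoint]
    · congr 1
      ext ⟨a, b⟩
      simp only [mem_union, mem_filter, mem_univ, true_and, Finset.mem_offDiag]
      constructor
      · rintro (⟨h, h1, h2⟩ | ⟨h, h1, h2⟩)
        · exact ⟨h1, h2, ne_of_lt h⟩
        · exact ⟨h1, h2, ne_of_gt h⟩
      · rintro ⟨h1, h2, hne⟩
        rcases lt_or_gt_of_ne hne with h | h
        · exact Or.inl ⟨h, h1, h2⟩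
        · exact Or.inr ⟨h, h1, h2⟩
    · rw [Finset.disjoint_filter]
      rintro ⟨a, b⟩ _ ⟨h, _, _⟩ ⟨h', _, _⟩
      exact absurd h' (not_lt.2 h.le)
  rw [Finset.offDiag_card] at hunion
  rw [Nat.choose_two_right]
  rw [← hswap] at hunion
  have e1 : T.card * T.card - T.card = T.card * (T.card - 1) := by
    cases T.card with
    | zero => simp
    | succ k =>
      have : (k+1) * (k+1) = (k+1) * k + (k+1) := by ring
      simp [this, Nat.succ_sub_one]
  rw [e1] at hunion
  exact (Nat.div_eq_of_eq_mul_left two_pos (by omega)).symm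

lemma card_ge_thresh (p : Fin (n+1)) (σ : Perm (Fin n)) :
    (univ.filter (fun j : Fin n => (p:ℕ) ≤ (σ j:ℕ))).card = n - p := by
  rw [← Nat.card_Ico (p:ℕ) n]
  apply Finset.card_bij (fun v _ => (σ v : ℕ))
  · intro v hv
    simp only [mem_filter, mem_univ, true_and] at hv
    simp only [mem_Ico]
    exact ⟨hv, (σ v).isLt⟩
  · intro a _ b _ h
    exact σ.injective (Fin.val_injective h)
  · intro m hm
    simp only [mem_Ico] at hm
    refine ⟨σ.symm ⟨m, hm.2⟩, ?_, ?_⟩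
    · simp only [mem_filter, mem_univ, true_and, Equiv.apply_symm_apply]
      exact hm.1
    · simp [Equiv.apply_symm_apply]

lemma cross_eq (p : Fin (n+1)) (σ : Perm (Fin n))
    (hI : Inc p (fun i => (σ i : ℕ))) : cross p σ = (n - (p:ℕ)).choose 2 := by
  classical
  have hset : (univ.filter (fun q : Fin n × Fin n =>
        q.1 < q.2 ∧ (p:ℕ) ≤ (σ q.1 : ℕ) ∧ (σ q.1 : ℕ) < (σ q.2 : ℕ)))
      = (univ.filter (fun q : Fin n × Fin n => q.1 < q.2 ∧
          q.1 ∈ (univ.filter (fun j : Fin n => (p:ℕ) ≤ (σ j:ℕ)))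
          ∧ q.2 ∈ (univ.filter (fun j : Fin n => (p:ℕ) ≤ (σ j:ℕ))))) := by
    ext ⟨a, b⟩
    simp only [mem_filter, mem_univ, true_and]
    constructor
    · rintro ⟨h, h1, h2⟩
      exact ⟨h, h1, h1.trans h2.le⟩
    · rintro ⟨h, h1, h2⟩
      refine ⟨h, h1, ?_⟩
      have hne : (σ a : ℕ) ≠ (σ b : ℕ) :=
        fun hc => absurd (σ.injective (Fin.val_injective hc)) (ne_of_lt h)
      rcases lt_or_gt_of_ne hne with hlt | hgt
      · exact hlt
      · exact absurd ⟨h2, hgt⟩ (hI a b h)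
  rw [cross, hset, card_lt_pairs, card_ge_thresh]

lemma inc_of_ge (t : ℕ) (σ : Perm (Fin n)) (ht : n - 1 ≤ t) :
    Inc t (fun i => (σ i : ℕ)) := by
  intro j k _ hc
  simp only at hc
  have h1 := (σ j).isLt
  omega

lemma nat_card_sigma {ι : Type*} [Fintype ι] (A : ι → Type*) [∀ i, Finite (A i)] :
    Nat.card (Σ i, A i) = ∑ i, Nat.card (A i) := by
  haveI : ∀ i, Fintype (A i) := fun i => Fintype.ofFinite _
  rw [Nat.card_eq_fintype_card, Fintype.card_sigma]
  exact Finset.sum_congr rfl fun i _ => (Nat.card_eq_fintype_card).symm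

lemma card_decomp (P : Perm (Fin (n+1)) → Prop) :
    Nat.card {π : Perm (Fin (n+1)) // P π} =
      ∑ p : Fin (n+1), Nat.card {σ : Perm (Fin n) // P (glue p σ)} := by
  classical
  have e1 : {x : Fin (n+1) × Perm (Fin n) // P (glue x.1 x.2)} ≃
      {π : Perm (Fin (n+1)) // P π} :=
    Equiv.subtypeEquiv glueE (fun x => Iff.rfl)
  have e2 : {x : Fin (n+1) × Perm (Fin n) // P (glue x.1 x.2)} ≃
      Σ p : Fin (n+1), {σ : Perm (Fin n) // P (glue p σ)} :=
    Equiv.subtypeProdEquivSigmaSubtype (fun (p : Fin (n+1)) (σ : Perm (Fin n)) => P (glue p σ))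
  rw [← Nat.card_congr e1, Nat.card_congr e2, nat_card_sigma]

/-- the auxiliary count: 132-avoiding, no 123 pattern, and the top two values
appear in increasing order. -/
noncomputable def bb (m : ℕ) : ℕ :=
  Nat.card {σ : Perm (Fin m) // Avoids132 (fun i => (σ i : ℕ)) ∧
    Inc (m-2) (fun i => (σ i : ℕ)) ∧ count123 (fun i => (σ i : ℕ)) = 0}

lemma pred_glue (r : ℕ) (p : Fin (n+1)) (σ : Perm (Fin n)) :
    (Avoids132 (fun i => (glue p σ i : ℕ)) ∧ count123 (fun i => (glue p σ i : ℕ)) = r)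
    ↔ (Avoids132 (fun i => (σ i:ℕ)) ∧ Inc (p:ℕ) (fun i => (σ i:ℕ)) ∧
        count123 (fun i => (σ i:ℕ)) + (n - (p:ℕ)).choose 2 = r) := by
  rw [avoid_glue, count_glue, and_assoc]
  constructor
  · rintro ⟨hA, hI, hc⟩
    exact ⟨hA, hI, by rw [← cross_eq p σ hI]; exact hc⟩
  · rintro ⟨hA, hI, hc⟩
    exact ⟨hA, hI, by rw [cross_eq p σ hI]; exact hc⟩

lemma eval_a (r : ℕ) (p : Fin (n+1)) (hp : n - 1 ≤ (p:ℕ)) :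
    Nat.card {σ : Perm (Fin n) //
        Avoids132 (fun i => (glue p σ i : ℕ)) ∧ count123 (fun i => (glue p σ i : ℕ)) = r}
      = f r n := by
  rw [f]
  apply Nat.card_congr
  apply Equiv.subtypeEquivRight
  intro σ
  rw [pred_glue]
  have hch : (n - (p:ℕ)).choose 2 = 0 := Nat.choose_eq_zero_of_lt (by omega)
  constructor
  · rintro ⟨hA, _, hc⟩
    exact ⟨hA, by omega⟩
  · rintro ⟨hA, hc⟩
    exact ⟨hA, inc_of_ge _ _ hp, by omega⟩

lemma eval_b (p : Fin (n+1)) (hp : (p:ℕ) + 2 = n) :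
    Nat.card {σ : Perm (Fin n) //
        Avoids132 (fun i => (glue p σ i : ℕ)) ∧ count123 (fun i => (glue p σ i : ℕ)) = 1}
      = bb n := by
  rw [bb]
  apply Nat.card_congr
  apply Equiv.subtypeEquivRight
  intro σ
  rw [pred_glue]
  have hpn : (p:ℕ) = n - 2 := by omega
  have hch : (n - (n-2)).choose 2 = 1 := by
    have : n - (n - 2) = 2 := by omega
    rw [this]
    exact Nat.choose_self 2
  rw [hpn, hch]
  constructor
  · rintro ⟨hA, hI, hc⟩
    exact ⟨hA, hI, by omega⟩
  · rintro ⟨hA, hI, hc⟩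
    exact ⟨hA, hI, by omega⟩

lemma eval_c (r : ℕ) (p : Fin (n+1)) (hp : (p:ℕ) + 2 < n) (hr : r ≤ 1) :
    Nat.card {σ : Perm (Fin n) //
        Avoids132 (fun i => (glue p σ i : ℕ)) ∧ count123 (fun i => (glue p σ i : ℕ)) = r}
      = 0 := by
  have : IsEmpty {σ : Perm (Fin n) //
      Avoids132 (fun i => (glue p σ i : ℕ)) ∧ count123 (fun i => (glue p σ i : ℕ)) = r} := by
    constructor
    rintro ⟨σ, hσ⟩
    rw [pred_glue] at hσ
    obtain ⟨_, _, hc⟩ := hσ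
    have h3 : 3 ≤ (n - (p:ℕ)).choose 2 := by
      calc (3:ℕ) = Nat.choose 3 2 := by decide
      _ ≤ (n - (p:ℕ)).choose 2 := Nat.choose_le_choose 2 (by omega)
    omega
  exact Nat.card_of_isEmpty

end P16
namespace P16
open Equiv Finset
variable {n : ℕ}

lemma cnt_small {m : ℕ} (hm : m ≤ 2) (a : Fin m → ℕ) : count123 a = 0 := by
  rw [count123, Finset.card_eq_zero, Finset.filter_eq_empty_iff]
  rintro ⟨t1, t2, t3⟩ -
  rintro ⟨h1, h2, -⟩
  have e1 : (t1:ℕ) < (t2:ℕ) := h1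
  have e2 : (t2:ℕ) < (t3:ℕ) := h2
  have e3 := t3.isLt
  omega

lemma f1_small {m : ℕ} (hm : m < 3) : f 1 m = 0 := by
  rw [f]
  have : IsEmpty {π : Perm (Fin m) //
      Avoids132 (fun i => (π i : ℕ)) ∧ count123 (fun i => (π i : ℕ)) = 1} := by
    constructor
    rintro ⟨σ, -, hc⟩
    rw [cnt_small (by omega)] at hc
    exact absurd hc (by omega)
  exact Nat.card_of_isEmpty

lemma f0_one : f 0 1 = 1 := by
  rw [f]
  have h : ∀ σ : Perm (Fin 1),
      Avoids132 (fun i => (σ i : ℕ)) ∧ count123 (fun i => (σ i : ℕ)) = 0 := by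
    intro σ
    refine ⟨?_, cnt_small (by omega) _⟩
    intro i j k hij hjk
    have e1 : (i:ℕ) < (j:ℕ) := hij
    have := i.isLt; have := j.isLt
    omega
  rw [Nat.card_congr (Equiv.subtypeUnivEquiv h), Nat.card_eq_fintype_card]
  simp

lemma rec0 (m : ℕ) : f 0 (m+2) = 2 * f 0 (m+1) := by
  rw [f, card_decomp (P := fun π : Perm (Fin (m+2)) =>
    Avoids132 (fun i => (π i : ℕ)) ∧ count123 (fun i => (π i : ℕ)) = 0)]
  rw [Fin.sum_univ_castSucc, Fin.sum_univ_castSucc]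
  have hz : ∀ q : Fin m, Nat.card {σ : Perm (Fin (m+1)) //
      Avoids132 (fun i => (glue q.castSucc.castSucc σ i : ℕ)) ∧
        count123 (fun i => (glue q.castSucc.castSucc σ i : ℕ)) = 0} = 0 := by
    intro q
    have : IsEmpty {σ : Perm (Fin (m+1)) //
        Avoids132 (fun i => (glue q.castSucc.castSucc σ i : ℕ)) ∧
          count123 (fun i => (glue q.castSucc.castSucc σ i : ℕ)) = 0} := by
      constructor
      rintro ⟨σ, hσ⟩
      rw [pred_glue] at hσ
      obtain ⟨-, -, hc⟩ := hσ
      have hq : (q.castSucc.castSucc : ℕ) = (q : ℕ) := rfl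
      have hql : (q:ℕ) < m := q.isLt
      have h1 : 1 ≤ (m + 1 - (q.castSucc.castSucc:ℕ)).choose 2 := by
        calc (1:ℕ) = Nat.choose 2 2 := by decide
        _ ≤ _ := Nat.choose_le_choose 2 (by omega)
      omega
    exact Nat.card_of_isEmpty
  rw [Finset.sum_congr rfl (fun q _ => hz q), Finset.sum_const, smul_eq_mul, mul_zero]
  rw [eval_a 0 _ (by simp), eval_a 0 _ (by simp [Fin.val_last])]
  ring

lemma rec1 (m : ℕ) : f 1 (m+3) = 2 * f 1 (m+2) + bb (m+2) := by
  rw [f, card_decomp (P := fun π : Perm (Fin (m+3)) =>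
    Avoids132 (fun i => (π i : ℕ)) ∧ count123 (fun i => (π i : ℕ)) = 1)]
  rw [Fin.sum_univ_castSucc, Fin.sum_univ_castSucc, Fin.sum_univ_castSucc]
  have hz : ∀ q : Fin m, Nat.card {σ : Perm (Fin (m+2)) //
      Avoids132 (fun i => (glue q.castSucc.castSucc.castSucc σ i : ℕ)) ∧
        count123 (fun i => (glue q.castSucc.castSucc.castSucc σ i : ℕ)) = 1} = 0 := by
    intro q
    apply eval_c
    · have : (q.castSucc.castSucc.castSucc : ℕ) = (q:ℕ) := rfl
      have := q.isLt
      omega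
    · omega
  rw [Finset.sum_congr rfl (fun q _ => hz q), Finset.sum_const, smul_eq_mul, mul_zero]
  rw [eval_b _ (by simp [Fin.val_last])]
  rw [eval_a 1 _ (by simp [Fin.val_last]), eval_a 1 _ (by simp [Fin.val_last])]
  ring

lemma inc_glue_top (m : ℕ) (p : Fin (m+2)) (hp : (p:ℕ) = m) (σ : Perm (Fin (m+1))) :
    Inc m (fun i => (glue p σ i : ℕ)) := by
  intro j k hjk hc
  rcases Fin.eq_zero_or_eq_succ k with rfl | ⟨k', rfl⟩
  · exact absurd hjk (Fin.not_lt_zero j)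
  rcases Fin.eq_zero_or_eq_succ j with rfl | ⟨j', rfl⟩
  · simp only [glue_zero, glue_succ, coe_sa] at hc
    have := (σ k').isLt
    split_ifs at hc <;> omega
  · simp only [glue_succ, coe_sa] at hc
    have := (σ k').isLt
    have := (σ j').isLt
    split_ifs at hc <;> omega

lemma recb (m : ℕ) : bb (m+2) = f 0 (m+1) := by
  rw [bb]
  have hsub : m + 2 - 2 = m := rfl
  rw [hsub]
  rw [card_decomp (P := fun π : Perm (Fin (m+2)) =>
    Avoids132 (fun i => (π i : ℕ)) ∧ Inc m (fun i => (π i : ℕ)) ∧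
      count123 (fun i => (π i : ℕ)) = 0)]
  rw [Finset.sum_eq_single ((Fin.last m).castSucc)]
  · -- the surviving term
    rw [f]
    apply Nat.card_congr
    apply Equiv.subtypeEquivRight
    intro σ
    have hpv : ((Fin.last m).castSucc : ℕ) = m := by simp [Fin.val_last]
    constructor
    · rintro ⟨hA, -, hc⟩
      rw [avoid_glue] at hA
      rw [count_glue, cross_eq _ _ hA.2] at hc
      exact ⟨hA.1, by omega⟩
    · rintro ⟨hA, hc⟩
      have hI : Inc ((Fin.last m).castSucc : ℕ) (fun i => (σ i : ℕ)) :=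
        inc_of_ge _ _ (by omega)
      refine ⟨(avoid_glue _ _).2 ⟨hA, hI⟩, inc_glue_top m _ hpv σ, ?_⟩
      rw [count_glue, cross_eq _ _ hI, hpv, hc]
      have : m + 1 - m = 1 := by omega
      rw [this]
      rfl
  · -- other terms vanish
    intro b _ hb
    have hbv : (b:ℕ) ≠ m := by
      intro hc
      exact hb (Fin.ext (by simp [Fin.val_last, hc]))
    have hbl : (b:ℕ) < m + 2 := b.isLt
    rcases lt_or_gt_of_ne hbv with hlt | hgt
    · -- b < m : the count is positive
      have : IsEmpty {σ : Perm (Fin (m+1)) //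
          Avoids132 (fun i => (glue b σ i : ℕ)) ∧ Inc m (fun i => (glue b σ i : ℕ)) ∧
            count123 (fun i => (glue b σ i : ℕ)) = 0} := by
        constructor
        rintro ⟨σ, hA, -, hc⟩
        rw [avoid_glue] at hA
        rw [count_glue, cross_eq _ _ hA.2] at hc
        have h1 : 1 ≤ (m + 1 - (b:ℕ)).choose 2 := by
          calc (1:ℕ) = Nat.choose 2 2 := by decide
          _ ≤ _ := Nat.choose_le_choose 2 (by omega)
        omega
      exact Nat.card_of_isEmpty
    · -- b = m+1 : Inc m fails since the top value m+1 sits at position 0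
      have hbv2 : (b:ℕ) = m + 1 := by omega
      have : IsEmpty {σ : Perm (Fin (m+1)) //
          Avoids132 (fun i => (glue b σ i : ℕ)) ∧ Inc m (fun i => (glue b σ i : ℕ)) ∧
            count123 (fun i => (glue b σ i : ℕ)) = 0} := by
        constructor
        rintro ⟨σ, -, hI, -⟩
        set k := (glue b σ).symm ⟨m, by omega⟩ with hk
        have hkval : glue b σ k = ⟨m, by omega⟩ := Equiv.apply_symm_apply _ _
        have hk0 : k ≠ 0 := by
          intro hc
          rw [hc] at hkval
          have := congrArg Fin.val hkval
          rw [glue_zero] at this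
          simp at this
          omega
        refine hI 0 k (Fin.pos_iff_ne_zero.2 hk0) ?_
        constructor
        · show m ≤ ((glue b σ) k : ℕ)
          rw [hkval]
        · show ((glue b σ) k : ℕ) < ((glue b σ) 0 : ℕ)
          rw [hkval, glue_zero]
          simp only []
          omega
      exact Nat.card_of_isEmpty
  · intro hc
    exact absurd (Finset.mem_univ _) hc

lemma f0_closed (m : ℕ) : f 0 (m+1) = 2^m := by
  induction m with
  | zero => simpa using f0_one
  | succ k ih => rw [rec0, ih]; ring

lemma bb_closed (m : ℕ) : bb (m+2) = 2^m := by
  rw [recb, f0_closed]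

lemma f1_closed (m : ℕ) : f 1 (m+3) = (m+1) * 2^m := by
  induction m with
  | zero =>
    rw [rec1, f1_small (by omega), bb_closed]
    ring
  | succ k ih =>
    rw [rec1, ih, bb_closed]
    ring

end P16


/-- For every `n ≥ 3`, the number of permutations of `{1,…,n}` with no (132)
pattern and exactly one (123) pattern equals `(n-2)·2^{n-3}`, and this number
is `0` for `n < 3`; equivalently `Σ_{n≥0} f₁(n) zⁿ = z³/(1-2z)²` in `ℤ[[z]]`,
stated with the unit `(1-2z)²` cleared:
`(1-2z)²·Σ_{n≥0} f₁(n) zⁿ = z³`. -/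
theorem stmt16 :
    (∀ n : ℕ, 3 ≤ n → f 1 n = (n - 2) * 2 ^ (n - 3)) ∧
    (∀ n : ℕ, n < 3 → f 1 n = 0) ∧
    (1 - 2 * PowerSeries.X) ^ 2 * PowerSeries.mk (fun n => (f 1 n : ℤ)) =
      PowerSeries.X ^ 3 := by
  have hbig : ∀ n : ℕ, 3 ≤ n → f 1 n = (n - 2) * 2 ^ (n - 3) := by
    intro n hn
    obtain ⟨m, rfl⟩ := Nat.exists_eq_add_of_le hn
    have h1 : 3 + m - 2 = m + 1 := by omega
    have h2 : 3 + m - 3 = m := by omega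
    have h3 : 3 + m = m + 3 := by omega
    rw [h1, h2, h3, P16.f1_closed]
  refine ⟨hbig, fun n hn => P16.f1_small hn, ?_⟩
  apply PowerSeries.ext
  intro n
  set g := PowerSeries.mk (fun n => (f 1 n : ℤ)) with hg
  have h4 : (PowerSeries.C (R := ℤ)) 4 = 4 := by simp
  have hexp : (1 - 2 * PowerSeries.X) ^ 2 * g =
      g - (PowerSeries.C (R := ℤ) 4) * (PowerSeries.X ^ 1 * g)
        + (PowerSeries.C (R := ℤ) 4) * (PowerSeries.X ^ 2 * g) := by
    rw [h4]; ring
  rw [hexp, map_add, map_sub, PowerSeries.coeff_C_mul, PowerSeries.coeff_C_mul,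
    PowerSeries.coeff_X_pow, PowerSeries.coeff_X_pow_mul', PowerSeries.coeff_X_pow_mul']
  simp only [hg, PowerSeries.coeff_mk]
  match n with
  | 0 => norm_num [P16.f1_small]
  | 1 => norm_num [P16.f1_small]
  | 2 => norm_num [P16.f1_small]
  | 3 =>
    have e0 : f 1 3 = 1 := by simpa using P16.f1_closed 0
    norm_num [e0, P16.f1_small]
  | (Nat.succ (Nat.succ (Nat.succ (Nat.succ k)))) =>
    have hif1 : (1 ≤ k + 4) := by omega
    have hif2 : (2 ≤ k + 4) := by omega
    have hif3 : ¬(k + 4 = 3) := by omega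
    rw [if_pos hif1, if_pos hif2, if_neg hif3]
    have ha : k + 4 - 1 = k + 3 := by omega
    have hb : k + 4 - 2 = k + 2 := by omega
    rw [ha, hb]
    have e1 : f 1 (k + 4) = (k + 2) * 2 ^ (k+1) := by
      have := P16.f1_closed (k+1)
      convert this using 2
    have e2 : f 1 (k + 3) = (k + 1) * 2 ^ k := P16.f1_closed k
    rcases k with _ | j
    · have e3 : f 1 2 = 0 := P16.f1_small (by omega)
      norm_num [e1, e2, e3]
    · have e3 : f 1 (j + 3) = (j + 1) * 2 ^ j := P16.f1_closed j
      have hj2 : j + 1 + 2 = j + 3 := by omega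
      rw [e1, e2, hj2, e3]
      push_cast
      have p1 : (2:ℤ) ^ (j + 1 + 1) = 2 ^ j * 4 := by ring
      have p2 : (2:ℤ) ^ (j + 1) = 2 ^ j * 2 := by ring
      rw [p1, p2]
      ring
end

section
/- In the formal power series ring ℤ[[z]], one has (1−2z)⁴ · Σ_{n≥0} f₃(n) zⁿ = z⁵·(1−z)²; that is, the generating function for 132-avoiding permutations with exactly three (123) patterns is Σ_{n≥0} f₃(n) zⁿ = (1−z)²z⁵/(1−2z)⁴. -/
set_option maxRecDepth 4000
set_option maxHeartbeats 1000000
set_option linter.unnecessarySimpa false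

def count12 {m : ℕ} (a : Fin m → ℕ) : ℕ :=
  (Finset.univ.filter (fun t : Fin m × Fin m => t.1 < t.2 ∧ a t.1 < a t.2)).card

def count132 {m : ℕ} (a : Fin m → ℕ) : ℕ :=
  (Finset.univ.filter (fun t : Fin m × Fin m × Fin m =>
    t.1 < t.2.1 ∧ t.2.1 < t.2.2 ∧ a t.1 < a t.2.2 ∧ a t.2.2 < a t.2.1)).card

lemma avoids_iff_count132 {m : ℕ} (a : Fin m → ℕ) : Avoids132 a ↔ count132 a = 0 := by
  rw [count132, Finset.card_eq_zero, Finset.filter_eq_empty_iff]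
  constructor
  · rintro h ⟨i, j, k⟩ _ ⟨h1, h2, h3, h4⟩
    exact h i j k h1 h2 ⟨h3, h4⟩
  · intro h i j k h1 h2 ⟨h3, h4⟩
    exact h (Finset.mem_univ (i, j, k)) ⟨h1, h2, h3, h4⟩

instance {m : ℕ} (a : Fin m → ℕ) : Decidable (Avoids132 a) := by
  unfold Avoids132; infer_instance

section Join
open Equiv Finset

variable {j m : ℕ}

def posE (j m : ℕ) : (Fin j ⊕ (Fin 1 ⊕ Fin m)) ≃ Fin (j + (1 + m)) :=
  (Equiv.sumCongr (Equiv.refl _) finSumFinEquiv).trans finSumFinEquiv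

def valE (j m : ℕ) : (Fin m ⊕ (Fin j ⊕ Fin 1)) ≃ Fin (m + (j + 1)) :=
  (Equiv.sumCongr (Equiv.refl _) finSumFinEquiv).trans finSumFinEquiv

def middle (A : Equiv.Perm (Fin j)) (B : Equiv.Perm (Fin m)) :
    (Fin j ⊕ (Fin 1 ⊕ Fin m)) ≃ (Fin m ⊕ (Fin j ⊕ Fin 1)) where
  toFun := Sum.elim (fun a => Sum.inr (Sum.inl (A a)))
    (Sum.elim (fun u => Sum.inr (Sum.inr u)) (fun b => Sum.inl (B b)))
  invFun := Sum.elim (fun b => Sum.inr (Sum.inr (B.symm b)))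
    (Sum.elim (fun a => Sum.inl (A.symm a)) (fun u => Sum.inr (Sum.inl u)))
  left_inv := by rintro (a | u | b) <;> simp
  right_inv := by rintro (b | a | u) <;> simp

def join (A : Equiv.Perm (Fin j)) (B : Equiv.Perm (Fin m)) : Equiv.Perm (Fin (j + (1 + m))) :=
  ((posE j m).symm.trans ((middle A B).trans ((valE j m).trans (finCongr (by omega)))))

@[simp] lemma posE_left (a : Fin j) : ((posE j m (Sum.inl a)) : ℕ) = a := by simp [posE]
@[simp] lemma posE_mid (u : Fin 1) : ((posE j m (Sum.inr (Sum.inl u))) : ℕ) = j := by simp [posE]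
@[simp] lemma posE_right (b : Fin m) : ((posE j m (Sum.inr (Sum.inr b))) : ℕ) = j + 1 + b := by
  simp [posE]; omega

variable (A : Equiv.Perm (Fin j)) (B : Equiv.Perm (Fin m))

@[simp] lemma join_left (a : Fin j) : ((join A B (posE j m (Sum.inl a))) : ℕ) = m + A a := by
  simp [join, middle, valE]
@[simp] lemma join_mid (u : Fin 1) : ((join A B (posE j m (Sum.inr (Sum.inl u)))) : ℕ) = m + j := by
  simp [join, middle, valE]
@[simp] lemma join_right (b : Fin m) : ((join A B (posE j m (Sum.inr (Sum.inr b)))) : ℕ) = B b := by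
  simp [join, middle, valE]

@[simp] lemma fin_not_lt {c : ℕ} (x : Fin c) : c < (x : ℕ) ↔ False :=
  iff_false_intro (by have := x.is_lt; omega)
@[simp] lemma fin_not_lt_add {c d : ℕ} (x : Fin c) : c + d < (x : ℕ) ↔ False :=
  iff_false_intro (by have := x.is_lt; omega)
@[simp] lemma fin_lt_add {c d : ℕ} (x : Fin c) : (x : ℕ) < c + d ↔ True :=
  iff_of_true (by have := x.is_lt; omega) trivial
@[simp] lemma fin_lt_add3 {c d e : ℕ} (x : Fin c) : (x : ℕ) < c + d + e ↔ True :=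
  iff_of_true (by have := x.is_lt; omega) trivial
@[simp] lemma add3_not_lt_fin {c d e : ℕ} (x : Fin c) : c + d + e < (x : ℕ) ↔ False :=
  iff_false_intro (by have := x.is_lt; omega)

@[simp] lemma posE_lt_ll (a a' : Fin j) : posE j m (Sum.inl a) < posE j m (Sum.inl a') ↔ a < a' := by
  rw [Fin.lt_def, Fin.lt_def, posE_left, posE_left]
@[simp] lemma posE_lt_lm (a : Fin j) (u : Fin 1) :
    posE j m (Sum.inl a) < posE j m (Sum.inr (Sum.inl u)) ↔ True :=
  iff_of_true (by rw [Fin.lt_def, posE_left, posE_mid]; exact a.is_lt) trivial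
@[simp] lemma posE_lt_lr (a : Fin j) (b : Fin m) :
    posE j m (Sum.inl a) < posE j m (Sum.inr (Sum.inr b)) ↔ True :=
  iff_of_true (by rw [Fin.lt_def, posE_left, posE_right]; have := a.is_lt; omega) trivial
@[simp] lemma posE_lt_ml (u : Fin 1) (a : Fin j) :
    posE j m (Sum.inr (Sum.inl u)) < posE j m (Sum.inl a) ↔ False :=
  iff_false_intro (by rw [Fin.lt_def, posE_left, posE_mid]; have := a.is_lt; omega)
@[simp] lemma posE_lt_mm (u u' : Fin 1) :
    posE j m (Sum.inr (Sum.inl u)) < posE j m (Sum.inr (Sum.inl u')) ↔ False :=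
  iff_false_intro (by rw [Fin.lt_def, posE_mid, posE_mid]; omega)
@[simp] lemma posE_lt_mr (u : Fin 1) (b : Fin m) :
    posE j m (Sum.inr (Sum.inl u)) < posE j m (Sum.inr (Sum.inr b)) ↔ True :=
  iff_of_true (by rw [Fin.lt_def, posE_mid, posE_right]; omega) trivial
@[simp] lemma posE_lt_rl (b : Fin m) (a : Fin j) :
    posE j m (Sum.inr (Sum.inr b)) < posE j m (Sum.inl a) ↔ False :=
  iff_false_intro (by rw [Fin.lt_def, posE_left, posE_right]; have := a.is_lt; omega)
@[simp] lemma posE_lt_rm (b : Fin m) (u : Fin 1) :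
    posE j m (Sum.inr (Sum.inr b)) < posE j m (Sum.inr (Sum.inl u)) ↔ False :=
  iff_false_intro (by rw [Fin.lt_def, posE_mid, posE_right]; omega)
@[simp] lemma posE_lt_rr (b b' : Fin m) :
    posE j m (Sum.inr (Sum.inr b)) < posE j m (Sum.inr (Sum.inr b')) ↔ b < b' := by
  rw [Fin.lt_def, Fin.lt_def, posE_right, posE_right]; omega

lemma count123_join : count123 (fun i => ((join A B) i : ℕ)) =
    count123 (fun i => (A i : ℕ)) + count12 (fun i => (A i : ℕ)) + count123 (fun i => (B i : ℕ)) := by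
  rw [count123, count123, count123, count12, Finset.card_filter, Finset.card_filter,
    Finset.card_filter, Finset.card_filter]
  rw [← Equiv.sum_comp (Equiv.prodCongr (posE j m) (Equiv.prodCongr (posE j m) (posE j m)))]
  simp [Fintype.sum_sum_type, Fintype.sum_prod_type, -Finset.sum_boole, -Fin.val_fin_lt, Finset.sum_add_distrib]
  try ring

lemma count12_join : count12 (fun i => ((join A B) i : ℕ)) =
    count12 (fun i => (A i : ℕ)) + count12 (fun i => (B i : ℕ)) + j := by
  rw [count12, count12, count12, Finset.card_filter, Finset.card_filter, Finset.card_filter]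
  rw [← Equiv.sum_comp (Equiv.prodCongr (posE j m) (posE j m))]
  simp [Fintype.sum_sum_type, Fintype.sum_prod_type, -Finset.sum_boole, -Fin.val_fin_lt, Finset.sum_add_distrib]
  try ring

lemma count132_join : count132 (fun i => ((join A B) i : ℕ)) =
    count132 (fun i => (A i : ℕ)) + count132 (fun i => (B i : ℕ)) := by
  rw [count132, count132, count132, Finset.card_filter, Finset.card_filter, Finset.card_filter]
  rw [← Equiv.sum_comp (Equiv.prodCongr (posE j m) (Equiv.prodCongr (posE j m) (posE j m)))]
  simp [Fintype.sum_sum_type, Fintype.sum_prod_type, -Finset.sum_boole, -Fin.val_fin_lt, Finset.sum_add_distrib]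
  try ring


lemma join_top : join A B ⟨j, by omega⟩ = ⟨j + m, by omega⟩ := by
  have h : (⟨j, by omega⟩ : Fin (j + (1 + m))) = posE j m (Sum.inr (Sum.inl 0)) :=
    Fin.ext (by simp)
  rw [h]
  apply Fin.ext
  rw [join_mid]
  simp; omega

lemma join_inj {A A' : Equiv.Perm (Fin j)} {B B' : Equiv.Perm (Fin m)}
    (h : join A B = join A' B') : A = A' ∧ B = B' := by
  constructor
  · apply Equiv.ext; intro a
    have h1 := congrArg (fun e : Equiv.Perm (Fin (j + (1+m))) => ((e (posE j m (Sum.inl a))) : ℕ)) h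
    simp only [join_left] at h1
    exact Fin.ext (by omega)
  · apply Equiv.ext; intro b
    have h1 := congrArg (fun e : Equiv.Perm (Fin (j + (1+m))) => ((e (posE j m (Sum.inr (Sum.inr b)))) : ℕ)) h
    simp only [join_right] at h1
    exact Fin.ext h1

lemma join_surj (π : Equiv.Perm (Fin (j + (1 + m))))
    (hav : Avoids132 (fun i => (π i : ℕ)))
    (htop : π ⟨j, by omega⟩ = ⟨j + m, by omega⟩) : ∃ A B, join A B = π := by
  have hne : ∀ x : Fin (j + (1 + m)), x ≠ ⟨j, by omega⟩ → (π x : ℕ) < j + m := by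
    intro x hx
    have h1 : π x ≠ ⟨j + m, by omega⟩ := fun h => hx (π.injective (h.trans htop.symm))
    have h2 : (π x : ℕ) < j + (1 + m) := (π x).is_lt
    have h3 : (π x : ℕ) ≠ j + m := fun h => h1 (Fin.ext h)
    omega
  have hposl : ∀ a : Fin j, posE j m (Sum.inl a) ≠ ⟨j, by omega⟩ := by
    intro a h
    have := congrArg Fin.val h
    simp at this
    exact absurd this (Nat.ne_of_lt a.is_lt)
  have hposr : ∀ b : Fin m, posE j m (Sum.inr (Sum.inr b)) ≠ ⟨j, by omega⟩ := by
    intro b h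
    have := congrArg Fin.val h
    simp at this
    omega
  have hAB : ∀ (a : Fin j) (b : Fin m),
      (π (posE j m (Sum.inr (Sum.inr b))) : ℕ) < (π (posE j m (Sum.inl a)) : ℕ) := by
    intro a b
    have h1 : posE j m (Sum.inl a) < (⟨j, by omega⟩ : Fin (j + (1+m))) := by
      rw [Fin.lt_def]; simpa using a.is_lt
    have h2 : (⟨j, by omega⟩ : Fin (j + (1+m))) < posE j m (Sum.inr (Sum.inr b)) := by
      rw [Fin.lt_def]; simp; omega
    have h3 : ¬((π (posE j m (Sum.inl a)) : ℕ) < (π (posE j m (Sum.inr (Sum.inr b))) : ℕ) ∧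
        (π (posE j m (Sum.inr (Sum.inr b))) : ℕ) < j + m) := by
      have h3' := hav _ _ _ h1 h2
      simp only [htop] at h3'
      exact h3'
    have h4 : (π (posE j m (Sum.inr (Sum.inr b))) : ℕ) < j + m := hne _ (hposr b)
    have h5 : π (posE j m (Sum.inl a)) ≠ π (posE j m (Sum.inr (Sum.inr b))) := by
      intro h
      have h5' := (posE j m).injective (π.injective h)
      simp at h5'
    have h6 : (π (posE j m (Sum.inl a)) : ℕ) ≠ (π (posE j m (Sum.inr (Sum.inr b))) : ℕ) :=
      fun h => h5 (Fin.ext h)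
    by_contra hcon
    exact h3 ⟨by omega, by omega⟩
  have hBinj : Function.Injective (fun b : Fin m => (π (posE j m (Sum.inr (Sum.inr b))) : ℕ)) := by
    intro b b' h
    have h1 := π.injective (Fin.ext h : π (posE j m (Sum.inr (Sum.inr b))) = _)
    have h2 := (posE j m).injective h1
    simpa using h2
  have hAinj : Function.Injective (fun a : Fin j => (π (posE j m (Sum.inl a)) : ℕ)) := by
    intro a a' h
    have h1 := π.injective (Fin.ext h : π (posE j m (Sum.inl a)) = _)
    have h2 := (posE j m).injective h1
    simpa using h2
  have hApos : ∀ a : Fin j, m ≤ (π (posE j m (Sum.inl a)) : ℕ) := by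
    intro a
    have hsub : (Finset.image (fun b : Fin m => (π (posE j m (Sum.inr (Sum.inr b))) : ℕ)) Finset.univ)
        ⊆ Finset.range (π (posE j m (Sum.inl a)) : ℕ) := by
      intro y hy
      simp only [Finset.mem_image, Finset.mem_univ, true_and] at hy
      obtain ⟨b, rfl⟩ := hy
      simpa using hAB a b
    have hcard := Finset.card_le_card hsub
    rw [Finset.card_image_of_injective _ hBinj, Finset.card_range] at hcard
    simpa using hcard
  have hBneg : ∀ b : Fin m, (π (posE j m (Sum.inr (Sum.inr b))) : ℕ) < m := by
    intro b
    have hxlt : (π (posE j m (Sum.inr (Sum.inr b))) : ℕ) < j + m := hne _ (hposr b)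
    have hsub : insert (j + m) (Finset.image (fun a : Fin j => (π (posE j m (Sum.inl a)) : ℕ)) Finset.univ)
        ⊆ Finset.Ioc ((π (posE j m (Sum.inr (Sum.inr b))) : ℕ)) (j + m) := by
      intro y hy
      simp only [Finset.mem_insert, Finset.mem_image, Finset.mem_univ, true_and] at hy
      rcases hy with rfl | ⟨a, rfl⟩
      · simp [Finset.mem_Ioc]; omega
      · simp [Finset.mem_Ioc]
        exact ⟨hAB a b, le_of_lt (hne _ (hposl a))⟩
    have hcard := Finset.card_le_card hsub
    have hnotmem : (j + m) ∉ (Finset.image (fun a : Fin j => (π (posE j m (Sum.inl a)) : ℕ)) Finset.univ) := by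
      simp only [Finset.mem_image, Finset.mem_univ, true_and]
      rintro ⟨a, ha⟩
      exact absurd ha (Nat.ne_of_lt (hne _ (hposl a)))
    rw [Finset.card_insert_of_notMem hnotmem, Finset.card_image_of_injective _ hAinj,
      Nat.card_Ioc] at hcard
    simp at hcard
    omega
  have hA' : ∀ a : Fin j, (π (posE j m (Sum.inl a)) : ℕ) - m < j := by
    intro a
    have h1 := hne _ (hposl a)
    have h2 := hApos a
    omega
  let α : Fin j → Fin j := fun a => ⟨(π (posE j m (Sum.inl a)) : ℕ) - m, hA' a⟩
  have hαinj : Function.Injective α := by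
    intro a a' h
    have h1 : (π (posE j m (Sum.inl a)) : ℕ) - m = (π (posE j m (Sum.inl a')) : ℕ) - m :=
      congrArg Fin.val h
    have h2 := hApos a
    have h3 := hApos a'
    have h4 : (π (posE j m (Sum.inl a)) : ℕ) = (π (posE j m (Sum.inl a')) : ℕ) := by omega
    exact hAinj h4
  let A : Equiv.Perm (Fin j) := Equiv.ofBijective α (Finite.injective_iff_bijective.mp hαinj)
  let β : Fin m → Fin m := fun b => ⟨(π (posE j m (Sum.inr (Sum.inr b))) : ℕ), hBneg b⟩
  have hβinj : Function.Injective β := by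
    intro b b' h
    have h1 := congrArg Fin.val h
    exact hBinj h1
  let B : Equiv.Perm (Fin m) := Equiv.ofBijective β (Finite.injective_iff_bijective.mp hβinj)
  refine ⟨A, B, ?_⟩
  apply Equiv.ext
  intro x
  obtain ⟨y, rfl⟩ := (posE j m).surjective x
  rcases y with a | u | b
  · apply Fin.ext
    rw [join_left]
    have : (A a : ℕ) = (π (posE j m (Sum.inl a)) : ℕ) - m := rfl
    rw [this]
    have := hApos a
    omega
  · apply Fin.ext
    rw [join_mid]
    have h : posE j m (Sum.inr (Sum.inl u)) = ⟨j, by omega⟩ := Fin.ext (by simp)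
    rw [h, htop]
    simp; omega
  · apply Fin.ext
    rw [join_right]
    rfl

lemma avoids_join : Avoids132 (fun i => ((join A B) i : ℕ)) ↔
    (Avoids132 (fun i => (A i : ℕ)) ∧ Avoids132 (fun i => (B i : ℕ))) := by
  rw [avoids_iff_count132, avoids_iff_count132, avoids_iff_count132, count132_join]
  omega

end Join
open Finset Equiv in
lemma core_card (W : ℕ → ℕ → Prop) [∀ x y : ℕ, Decidable (W x y)] (j m : ℕ) :
    (Finset.univ.filter (fun π : Equiv.Perm (Fin (j + (1 + m))) =>
      Avoids132 (fun i => (π i : ℕ)) ∧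
      W (count123 (fun i => (π i : ℕ))) (count12 (fun i => (π i : ℕ))) ∧
      π ⟨j, by omega⟩ = ⟨j + m, by omega⟩)).card =
    (Finset.univ.filter (fun AB : Equiv.Perm (Fin j) × Equiv.Perm (Fin m) =>
      Avoids132 (fun i => (AB.1 i : ℕ)) ∧ Avoids132 (fun i => (AB.2 i : ℕ)) ∧
      W (count123 (fun i => (AB.1 i : ℕ)) + count12 (fun i => (AB.1 i : ℕ)) +
          count123 (fun i => (AB.2 i : ℕ)))
        (count12 (fun i => (AB.1 i : ℕ)) + count12 (fun i => (AB.2 i : ℕ)) + j))).card := by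
  symm
  apply Finset.card_bij (fun AB _ => join AB.1 AB.2)
  · rintro ⟨A, B⟩ hAB
    simp only [Finset.mem_filter, Finset.mem_univ, true_and] at hAB ⊢
    obtain ⟨h1, h2, h3⟩ := hAB
    refine ⟨(avoids_join A B).mpr ⟨h1, h2⟩, ?_, join_top A B⟩
    rw [count123_join, count12_join]
    exact h3
  · rintro ⟨A, B⟩ _ ⟨A', B'⟩ _ h
    obtain ⟨h1, h2⟩ := join_inj h
    exact Prod.ext h1 h2
  · intro π hπ
    simp only [Finset.mem_filter, Finset.mem_univ, true_and] at hπ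
    obtain ⟨h1, h2, h3⟩ := hπ
    obtain ⟨A, B, rfl⟩ := join_surj π h1 h3
    refine ⟨(A, B), ?_, rfl⟩
    simp only [Finset.mem_filter, Finset.mem_univ, true_and]
    have hav := (avoids_join A B).mp h1
    rw [count123_join, count12_join] at h2
    exact ⟨hav.1, hav.2, h2⟩

def g (n r s : ℕ) : ℕ :=
  (Finset.univ.filter (fun π : Equiv.Perm (Fin n) =>
    Avoids132 (fun i => (π i : ℕ)) ∧ count123 (fun i => (π i : ℕ)) = r ∧
      count12 (fun i => (π i : ℕ)) = s)).card

def fc (r n : ℕ) : ℕ :=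
  (Finset.univ.filter (fun π : Equiv.Perm (Fin n) =>
    Avoids132 (fun i => (π i : ℕ)) ∧ count123 (fun i => (π i : ℕ)) = r)).card

open Finset Equiv in
lemma pairs_g (j m r s : ℕ) :
    (Finset.univ.filter (fun AB : Equiv.Perm (Fin j) × Equiv.Perm (Fin m) =>
      Avoids132 (fun i => (AB.1 i : ℕ)) ∧ Avoids132 (fun i => (AB.2 i : ℕ)) ∧
      (count123 (fun i => (AB.1 i : ℕ)) + count12 (fun i => (AB.1 i : ℕ)) +
          count123 (fun i => (AB.2 i : ℕ)) = r ∧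
        count12 (fun i => (AB.1 i : ℕ)) + count12 (fun i => (AB.2 i : ℕ)) + j = s))).card =
    ∑ rA ∈ Finset.range (r+1), ∑ sA ∈ Finset.range (s+1),
      if rA + sA ≤ r ∧ sA + j ≤ s then
        g j rA sA * g m (r - rA - sA) (s - sA - j) else 0 := by
  rw [Finset.card_eq_sum_card_fiberwise
    (f := fun AB : Equiv.Perm (Fin j) × Equiv.Perm (Fin m) =>
      (count123 (fun i => (AB.1 i : ℕ)), count12 (fun i => (AB.1 i : ℕ))))
    (t := Finset.range (r+1) ×ˢ Finset.range (s+1))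
    (by intro x hx
        simp only [Finset.mem_coe, Finset.mem_filter, Finset.mem_univ, true_and] at hx
        simp only [Finset.mem_coe, Finset.mem_product, Finset.mem_range]
        omega)]
  rw [Finset.sum_product]
  apply Finset.sum_congr rfl
  intro rA hrA
  apply Finset.sum_congr rfl
  intro sA hsA
  rw [Finset.filter_filter]
  by_cases hg : rA + sA ≤ r ∧ sA + j ≤ s
  · rw [if_pos hg]
    rw [Finset.filter_congr (q := fun AB : Equiv.Perm (Fin j) × Equiv.Perm (Fin m) =>
        (Avoids132 (fun i => (AB.1 i : ℕ)) ∧ count123 (fun i => (AB.1 i : ℕ)) = rA ∧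
          count12 (fun i => (AB.1 i : ℕ)) = sA) ∧
        (Avoids132 (fun i => (AB.2 i : ℕ)) ∧ count123 (fun i => (AB.2 i : ℕ)) = r - rA - sA ∧
          count12 (fun i => (AB.2 i : ℕ)) = s - sA - j))
      (by intro x _
          simp only [Prod.mk.injEq]
          constructor
          · rintro ⟨⟨a1, a2, e1, e2⟩, k1, k2⟩
            exact ⟨⟨a1, k1, k2⟩, ⟨a2, by omega, by omega⟩⟩
          · rintro ⟨⟨a1, k1, k2⟩, ⟨a2, e1, e2⟩⟩
            exact ⟨⟨a1, a2, by omega, by omega⟩, k1, k2⟩)]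
    rw [← Finset.univ_product_univ,
      Finset.filter_product (p := fun A : Equiv.Perm (Fin j) =>
        Avoids132 (fun i => (A i : ℕ)) ∧ count123 (fun i => (A i : ℕ)) = rA ∧
          count12 (fun i => (A i : ℕ)) = sA)
      (q := fun B : Equiv.Perm (Fin m) =>
        Avoids132 (fun i => (B i : ℕ)) ∧ count123 (fun i => (B i : ℕ)) = r - rA - sA ∧
          count12 (fun i => (B i : ℕ)) = s - sA - j),
      Finset.card_product]
    rfl
  · rw [if_neg hg]
    rw [Finset.card_eq_zero, Finset.filter_eq_empty_iff]
    rintro AB _ ⟨⟨a1, a2, e1, e2⟩, k⟩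
    simp only [Prod.mk.injEq] at k
    omega

open Finset Equiv in
lemma pairs_f (j m r : ℕ) :
    (Finset.univ.filter (fun AB : Equiv.Perm (Fin j) × Equiv.Perm (Fin m) =>
      Avoids132 (fun i => (AB.1 i : ℕ)) ∧ Avoids132 (fun i => (AB.2 i : ℕ)) ∧
      (count123 (fun i => (AB.1 i : ℕ)) + count12 (fun i => (AB.1 i : ℕ)) +
          count123 (fun i => (AB.2 i : ℕ)) = r))).card =
    ∑ rA ∈ Finset.range (r+1), ∑ sA ∈ Finset.range (r+1),
      if rA + sA ≤ r then g j rA sA * fc (r - rA - sA) m else 0 := by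
  rw [Finset.card_eq_sum_card_fiberwise
    (f := fun AB : Equiv.Perm (Fin j) × Equiv.Perm (Fin m) =>
      (count123 (fun i => (AB.1 i : ℕ)), count12 (fun i => (AB.1 i : ℕ))))
    (t := Finset.range (r+1) ×ˢ Finset.range (r+1))
    (by intro x hx
        simp only [Finset.mem_coe, Finset.mem_filter, Finset.mem_univ, true_and] at hx
        simp only [Finset.mem_coe, Finset.mem_product, Finset.mem_range]
        omega)]
  rw [Finset.sum_product]
  apply Finset.sum_congr rfl
  intro rA hrA
  apply Finset.sum_congr rfl
  intro sA hsA
  rw [Finset.filter_filter]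
  by_cases hg : rA + sA ≤ r
  · rw [if_pos hg]
    rw [Finset.filter_congr (q := fun AB : Equiv.Perm (Fin j) × Equiv.Perm (Fin m) =>
        (Avoids132 (fun i => (AB.1 i : ℕ)) ∧ count123 (fun i => (AB.1 i : ℕ)) = rA ∧
          count12 (fun i => (AB.1 i : ℕ)) = sA) ∧
        (Avoids132 (fun i => (AB.2 i : ℕ)) ∧ count123 (fun i => (AB.2 i : ℕ)) = r - rA - sA))
      (by intro x _
          simp only [Prod.mk.injEq]
          constructor
          · rintro ⟨⟨a1, a2, e1⟩, k1, k2⟩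
            exact ⟨⟨a1, k1, k2⟩, ⟨a2, by omega⟩⟩
          · rintro ⟨⟨a1, k1, k2⟩, ⟨a2, e1⟩⟩
            exact ⟨⟨a1, a2, by omega⟩, k1, k2⟩)]
    rw [← Finset.univ_product_univ,
      Finset.filter_product (p := fun A : Equiv.Perm (Fin j) =>
        Avoids132 (fun i => (A i : ℕ)) ∧ count123 (fun i => (A i : ℕ)) = rA ∧
          count12 (fun i => (A i : ℕ)) = sA)
      (q := fun B : Equiv.Perm (Fin m) =>
        Avoids132 (fun i => (B i : ℕ)) ∧ count123 (fun i => (B i : ℕ)) = r - rA - sA),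
      Finset.card_product]
    rfl
  · rw [if_neg hg]
    rw [Finset.card_eq_zero, Finset.filter_eq_empty_iff]
    rintro AB _ ⟨⟨a1, a2, e1⟩, k⟩
    simp only [Prod.mk.injEq] at k
    omega

section Reindex
open Finset Equiv

variable {m m' : ℕ} (a : Fin m → ℕ) (e : Fin m' ≃ Fin m)

lemma count123_reindex (he : ∀ x y : Fin m', e x < e y ↔ x < y) : count123 (fun i => a (e i)) = count123 a := by
  rw [count123, count123, Finset.card_filter, Finset.card_filter,
    ← Equiv.sum_comp (Equiv.prodCongr e (Equiv.prodCongr e e))]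
  exact Finset.sum_congr rfl fun t _ => if_congr (by simp [he]) rfl rfl

lemma count12_reindex (he : ∀ x y : Fin m', e x < e y ↔ x < y) : count12 (fun i => a (e i)) = count12 a := by
  rw [count12, count12, Finset.card_filter, Finset.card_filter,
    ← Equiv.sum_comp (Equiv.prodCongr e e)]
  exact Finset.sum_congr rfl fun t _ => if_congr (by simp [he]) rfl rfl

lemma count132_reindex (he : ∀ x y : Fin m', e x < e y ↔ x < y) : count132 (fun i => a (e i)) = count132 a := by
  rw [count132, count132, Finset.card_filter, Finset.card_filter,
    ← Equiv.sum_comp (Equiv.prodCongr e (Equiv.prodCongr e e))]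
  exact Finset.sum_congr rfl fun t _ => if_congr (by simp [he]) rfl rfl

lemma avoids_reindex (he : ∀ x y : Fin m', e x < e y ↔ x < y) : Avoids132 (fun i => a (e i)) ↔ Avoids132 a := by
  rw [avoids_iff_count132, avoids_iff_count132, count132_reindex a e he]

end Reindex

open Finset Equiv in
lemma card_cast {n n' : ℕ} (h : n' = n) (p : Equiv.Perm (Fin n) → Prop)
    (p' : Equiv.Perm (Fin n') → Prop) [DecidablePred p] [DecidablePred p']
    (hp : ∀ π : Equiv.Perm (Fin n'), p' π ↔ p ((finCongr h).permCongr π)) :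
    (Finset.univ.filter p').card = (Finset.univ.filter p).card := by
  apply Finset.card_bij (fun π _ => (finCongr h).permCongr π)
  · intro π hπ
    simp only [Finset.mem_filter, Finset.mem_univ, true_and] at hπ ⊢
    exact (hp π).mp hπ
  · intro π1 _ π2 _ hh
    exact (finCongr h).permCongr.injective hh
  · intro π hπ
    simp only [Finset.mem_filter, Finset.mem_univ, true_and] at hπ
    refine ⟨(finCongr h).permCongr.symm π, ?_, (finCongr h).permCongr.apply_symm_apply π⟩
    simp only [Finset.mem_filter, Finset.mem_univ, true_and]
    rw [hp, (finCongr h).permCongr.apply_symm_apply π]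
    exact hπ

open Finset Equiv in
lemma fiber_count {n : ℕ} (jf : Fin (n+1)) (π : Equiv.Perm (Fin (n+1)))
    (h : (n:ℕ)+1 = (jf : ℕ) + (1 + (n - (jf:ℕ)))) :
    (count123 (fun i => (((finCongr h).permCongr π) i : ℕ)) = count123 (fun i => (π i : ℕ))) ∧
    (count12 (fun i => (((finCongr h).permCongr π) i : ℕ)) = count12 (fun i => (π i : ℕ))) ∧
    (Avoids132 (fun i => (((finCongr h).permCongr π) i : ℕ)) ↔ Avoids132 (fun i => (π i : ℕ))) ∧
    (((finCongr h).permCongr π) ⟨(jf:ℕ), by omega⟩ = ⟨(jf:ℕ) + (n - (jf:ℕ)), by omega⟩ ↔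
      π.symm (Fin.last n) = jf) := by
  have hfun : (fun i => (((finCongr h).permCongr π) i : ℕ)) =
      (fun i => (fun k => (π k : ℕ)) ((finCongr h).symm i)) := by
    funext i
    rw [Equiv.permCongr_apply, finCongr_apply_coe]
  have he : ∀ x y : Fin ((jf:ℕ) + (1 + (n - (jf:ℕ)))),
      (finCongr h).symm x < (finCongr h).symm y ↔ x < y := by
    intro x y
    rw [Fin.lt_def, Fin.lt_def, finCongr_symm_apply_coe, finCongr_symm_apply_coe, ← Fin.lt_def]
  refine ⟨?_, ?_, ?_, ?_⟩
  · rw [hfun]; exact count123_reindex (fun k => (π k : ℕ)) (finCongr h).symm he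
  · rw [hfun]; exact count12_reindex (fun k => (π k : ℕ)) (finCongr h).symm he
  · rw [hfun]; exact avoids_reindex (fun k => (π k : ℕ)) (finCongr h).symm he
  · have h1 : (finCongr h).symm (⟨(jf:ℕ), by omega⟩ : Fin ((jf:ℕ) + (1 + (n - (jf:ℕ))))) = jf := by
      apply Fin.ext
      rw [finCongr_symm_apply_coe]
    rw [Equiv.permCongr_apply, h1, Equiv.apply_eq_iff_eq_symm_apply]
    have h2 : (finCongr h).symm (⟨(jf:ℕ) + (n - (jf:ℕ)), by omega⟩ :
        Fin ((jf:ℕ) + (1 + (n - (jf:ℕ))))) = Fin.last n := by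
      apply Fin.ext
      rw [finCongr_symm_apply_coe]
      have := jf.is_lt
      simp [Fin.last]
      omega
    rw [h2, Equiv.symm_apply_eq, eq_comm]

open Finset Equiv in
lemma master_g (n r s : ℕ) :
    g (n+1) r s = ∑ jf : Fin (n+1), ∑ rA ∈ Finset.range (r+1), ∑ sA ∈ Finset.range (s+1),
      if rA + sA ≤ r ∧ sA + (jf:ℕ) ≤ s then
        g (jf:ℕ) rA sA * g (n - (jf:ℕ)) (r - rA - sA) (s - sA - (jf:ℕ)) else 0 := by
  rw [g, Finset.card_eq_sum_card_fiberwise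
    (f := fun π : Equiv.Perm (Fin (n+1)) => π.symm (Fin.last n)) (t := Finset.univ)
    (fun x _ => Finset.mem_univ _)]
  apply Finset.sum_congr rfl
  intro jf _
  have h : (n:ℕ)+1 = (jf:ℕ) + (1 + (n - (jf:ℕ))) := by have := jf.is_lt; omega
  rw [Finset.filter_filter]
  rw [card_cast h
    (p := fun σ : Equiv.Perm (Fin ((jf:ℕ) + (1 + (n - (jf:ℕ))))) =>
      Avoids132 (fun i => (σ i : ℕ)) ∧
      (count123 (fun i => (σ i : ℕ)) = r ∧ count12 (fun i => (σ i : ℕ)) = s) ∧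
      σ ⟨(jf:ℕ), by omega⟩ = ⟨(jf:ℕ) + (n - (jf:ℕ)), by omega⟩)
    (p' := fun π : Equiv.Perm (Fin (n+1)) =>
      (Avoids132 (fun i => (π i : ℕ)) ∧ count123 (fun i => (π i : ℕ)) = r ∧
        count12 (fun i => (π i : ℕ)) = s) ∧ π.symm (Fin.last n) = jf)
    (by intro π
        obtain ⟨hc1, hc2, hc3, hc4⟩ := fiber_count jf π h
        constructor
        · rintro ⟨⟨av, e1, e2⟩, key⟩
          exact ⟨hc3.mpr av, ⟨by rw [hc1]; exact e1, by rw [hc2]; exact e2⟩, hc4.mpr key⟩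
        · rintro ⟨av, ⟨e1, e2⟩, key⟩
          exact ⟨⟨hc3.mp av, by rw [← hc1]; exact e1, by rw [← hc2]; exact e2⟩, hc4.mp key⟩)]
  rw [core_card (fun x y => x = r ∧ y = s) (jf:ℕ) (n - (jf:ℕ))]
  rw [pairs_g (jf:ℕ) (n - (jf:ℕ)) r s]

open Finset Equiv in
lemma master_f (n r : ℕ) :
    fc r (n+1) = ∑ jf : Fin (n+1), ∑ rA ∈ Finset.range (r+1), ∑ sA ∈ Finset.range (r+1),
      if rA + sA ≤ r then
        g (jf:ℕ) rA sA * fc (r - rA - sA) (n - (jf:ℕ)) else 0 := by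
  rw [fc, Finset.card_eq_sum_card_fiberwise
    (f := fun π : Equiv.Perm (Fin (n+1)) => π.symm (Fin.last n)) (t := Finset.univ)
    (fun x _ => Finset.mem_univ _)]
  apply Finset.sum_congr rfl
  intro jf _
  have h : (n:ℕ)+1 = (jf:ℕ) + (1 + (n - (jf:ℕ))) := by have := jf.is_lt; omega
  rw [Finset.filter_filter]
  rw [card_cast h
    (p := fun σ : Equiv.Perm (Fin ((jf:ℕ) + (1 + (n - (jf:ℕ))))) =>
      Avoids132 (fun i => (σ i : ℕ)) ∧
      (count123 (fun i => (σ i : ℕ)) = r) ∧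
      σ ⟨(jf:ℕ), by omega⟩ = ⟨(jf:ℕ) + (n - (jf:ℕ)), by omega⟩)
    (p' := fun π : Equiv.Perm (Fin (n+1)) =>
      (Avoids132 (fun i => (π i : ℕ)) ∧ count123 (fun i => (π i : ℕ)) = r) ∧
        π.symm (Fin.last n) = jf)
    (by intro π
        obtain ⟨hc1, hc2, hc3, hc4⟩ := fiber_count jf π h
        constructor
        · rintro ⟨⟨av, e1⟩, key⟩
          exact ⟨hc3.mpr av, by rw [hc1]; exact e1, hc4.mpr key⟩
        · rintro ⟨av, e1, key⟩
          exact ⟨⟨hc3.mp av, by rw [← hc1]; exact e1⟩, hc4.mp key⟩)]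
  rw [core_card (fun x _ => x = r) (jf:ℕ) (n - (jf:ℕ))]
  rw [pairs_f (jf:ℕ) (n - (jf:ℕ)) r]

lemma sum_fin_truncate {M : Type*} [AddCommMonoid M] (n K : ℕ) (F : ℕ → M)
    (hF : ∀ k, K ≤ k → F k = 0) :
    (∑ jf : Fin (n+1), F (jf : ℕ)) = ∑ k ∈ Finset.range K, if k ≤ n then F k else 0 := by
  rw [Fin.sum_univ_eq_sum_range]
  have e1 : ∑ k ∈ Finset.range (n+1), F k = ∑ k ∈ Finset.range (n+1), if k ≤ n then F k else 0 :=
    Finset.sum_congr rfl (fun k hk => (if_pos (Nat.lt_succ_iff.mp (Finset.mem_range.mp hk))).symm)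
  have e2 : ∑ k ∈ Finset.range (n+1), (if k ≤ n then F k else 0) =
      ∑ k ∈ Finset.range (max (n+1) K), (if k ≤ n then F k else 0) :=
    Finset.sum_subset (Finset.range_subset_range.mpr (le_max_left (n+1) K))
      (fun x _ hnx => if_neg (by simp at hnx; omega))
  have e3 : ∑ k ∈ Finset.range K, (if k ≤ n then F k else 0) =
      ∑ k ∈ Finset.range (max (n+1) K), (if k ≤ n then F k else 0) :=
    Finset.sum_subset (Finset.range_subset_range.mpr (le_max_right (n+1) K))
      (fun x _ hnx => by
        by_cases hxn : x ≤ n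
        · rw [if_pos hxn, hF x (by simp at hnx; omega)]
        · rw [if_neg hxn])
  rw [e1, e2, ← e3]

lemma gv000 : g 0 0 0 = 1 := by decide
lemma gv100 : g 1 0 0 = 1 := by decide
lemma gv200 : g 2 0 0 = 1 := by decide
lemma gv300 : g 3 0 0 = 1 := by decide
lemma gv0_10 : g 0 1 0 = 0 := by decide
lemma gv0_20 : g 0 2 0 = 0 := by decide
lemma gv0_30 : g 0 3 0 = 0 := by decide
lemma gv0_01 : g 0 0 1 = 0 := by decide
lemma gv0_11 : g 0 1 1 = 0 := by decide
lemma gv0_02 : g 0 0 2 = 0 := by decide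
lemma gv0_12 : g 0 1 2 = 0 := by decide
lemma gv0_21 : g 0 2 1 = 0 := by decide
lemma gv0_03 : g 0 0 3 = 0 := by decide
lemma gv1_10 : g 1 1 0 = 0 := by decide
lemma gv1_01 : g 1 0 1 = 0 := by decide
lemma gv1_20 : g 1 2 0 = 0 := by decide
lemma gv2_10 : g 2 1 0 = 0 := by decide
lemma fcv0 : fc 0 0 = 1 := by decide
lemma fcv1 : fc 1 0 = 0 := by decide
lemma fcv2 : fc 2 0 = 0 := by decide
lemma fcv3 : fc 3 0 = 0 := by decide

noncomputable def mkg (r s : ℕ) : PowerSeries ℤ := PowerSeries.mk (fun n => (g n r s : ℤ))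
noncomputable def mkf (r : ℕ) : PowerSeries ℤ := PowerSeries.mk (fun n => (fc r n : ℤ))

lemma ps_succ_helper {c : ℤ} {F H : PowerSeries ℤ} (h0 : PowerSeries.coeff (R := ℤ) 0 F = c)
    (hs : ∀ n : ℕ, PowerSeries.coeff (R := ℤ) (n+1) F = PowerSeries.coeff (R := ℤ) n H) :
    F = PowerSeries.C (R := ℤ) c + PowerSeries.X * H := by
  ext n
  cases n with
  | zero =>
    rw [h0]
    simp
  | succ n =>
    rw [map_add, PowerSeries.coeff_succ_X_mul, PowerSeries.coeff_C]
    simp [hs n]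


lemma coeff_conv (rA sA rB n : ℕ) :
    PowerSeries.coeff (R := ℤ) n (mkg rA sA * mkf rB) =
      ((∑ k ∈ Finset.range (n+1), g k rA sA * fc rB (n - k) : ℕ) : ℤ) := by
  rw [PowerSeries.coeff_mul, Finset.Nat.sum_antidiagonal_eq_sum_range_succ_mk]
  push_cast
  exact Finset.sum_congr rfl fun k _ => by simp [mkg, mkf, PowerSeries.coeff_mk]

lemma Bg00 : mkg 0 0 = PowerSeries.C (R := ℤ) 1 + PowerSeries.X * (mkg 0 0) := by
  apply ps_succ_helper
  · simp [mkg, gv000, gv100, gv200, gv300, gv0_10, gv0_20, gv0_30, gv0_01, gv0_11, gv0_02, gv0_12, gv0_21, gv0_03, gv1_10, gv1_01, gv1_20, gv2_10]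
  · intro n
    have hL : PowerSeries.coeff (R := ℤ) (n+1) (mkg 0 0) = ((g (n+1) 0 0 : ℕ) : ℤ) := by
      rw [mkg, PowerSeries.coeff_mk]
    rw [hL]
    have hz : ∀ k, 1 ≤ k → (∑ rA ∈ Finset.range (0+1), ∑ sA ∈ Finset.range (0+1),
        if rA + sA ≤ 0 ∧ sA + k ≤ 0 then g k rA sA * g (n - k) (0 - rA - sA) (0 - sA - k) else 0) = 0 :=
      fun k hk => Finset.sum_eq_zero fun rA _ => Finset.sum_eq_zero fun sA _ => if_neg (by omega)
    have ht := sum_fin_truncate n 1 (fun k => ∑ rA ∈ Finset.range (0+1), ∑ sA ∈ Finset.range (0+1),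
        if rA + sA ≤ 0 ∧ sA + k ≤ 0 then g k rA sA * g (n - k) (0 - rA - sA) (0 - sA - k) else 0) hz
    have hseq : g (n+1) 0 0 = g n 0 0 := by
      rw [master_g, ht]
      simp [Finset.sum_range_succ, gv000, gv100, gv200, gv300, gv0_10, gv0_20, gv0_30, gv0_01, gv0_11, gv0_02, gv0_12, gv0_21, gv0_03, gv1_10, gv1_01, gv1_20, gv2_10]
    rw [hseq]
    simp only [map_add, PowerSeries.coeff_X_pow_mul', mkg, PowerSeries.coeff_mk]
    try push_cast
    try ring

lemma Bg10 : mkg 1 0 = PowerSeries.C (R := ℤ) 0 + PowerSeries.X * (mkg 1 0) := by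
  apply ps_succ_helper
  · simp [mkg, gv000, gv100, gv200, gv300, gv0_10, gv0_20, gv0_30, gv0_01, gv0_11, gv0_02, gv0_12, gv0_21, gv0_03, gv1_10, gv1_01, gv1_20, gv2_10]
  · intro n
    have hL : PowerSeries.coeff (R := ℤ) (n+1) (mkg 1 0) = ((g (n+1) 1 0 : ℕ) : ℤ) := by
      rw [mkg, PowerSeries.coeff_mk]
    rw [hL]
    have hz : ∀ k, 1 ≤ k → (∑ rA ∈ Finset.range (1+1), ∑ sA ∈ Finset.range (0+1),
        if rA + sA ≤ 1 ∧ sA + k ≤ 0 then g k rA sA * g (n - k) (1 - rA - sA) (0 - sA - k) else 0) = 0 :=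
      fun k hk => Finset.sum_eq_zero fun rA _ => Finset.sum_eq_zero fun sA _ => if_neg (by omega)
    have ht := sum_fin_truncate n 1 (fun k => ∑ rA ∈ Finset.range (1+1), ∑ sA ∈ Finset.range (0+1),
        if rA + sA ≤ 1 ∧ sA + k ≤ 0 then g k rA sA * g (n - k) (1 - rA - sA) (0 - sA - k) else 0) hz
    have hseq : g (n+1) 1 0 = g n 1 0 := by
      rw [master_g, ht]
      simp [Finset.sum_range_succ, gv000, gv100, gv200, gv300, gv0_10, gv0_20, gv0_30, gv0_01, gv0_11, gv0_02, gv0_12, gv0_21, gv0_03, gv1_10, gv1_01, gv1_20, gv2_10]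
    rw [hseq]
    simp only [map_add, PowerSeries.coeff_X_pow_mul', mkg, PowerSeries.coeff_mk]
    try push_cast
    try ring

lemma Bg20 : mkg 2 0 = PowerSeries.C (R := ℤ) 0 + PowerSeries.X * (mkg 2 0) := by
  apply ps_succ_helper
  · simp [mkg, gv000, gv100, gv200, gv300, gv0_10, gv0_20, gv0_30, gv0_01, gv0_11, gv0_02, gv0_12, gv0_21, gv0_03, gv1_10, gv1_01, gv1_20, gv2_10]
  · intro n
    have hL : PowerSeries.coeff (R := ℤ) (n+1) (mkg 2 0) = ((g (n+1) 2 0 : ℕ) : ℤ) := by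
      rw [mkg, PowerSeries.coeff_mk]
    rw [hL]
    have hz : ∀ k, 1 ≤ k → (∑ rA ∈ Finset.range (2+1), ∑ sA ∈ Finset.range (0+1),
        if rA + sA ≤ 2 ∧ sA + k ≤ 0 then g k rA sA * g (n - k) (2 - rA - sA) (0 - sA - k) else 0) = 0 :=
      fun k hk => Finset.sum_eq_zero fun rA _ => Finset.sum_eq_zero fun sA _ => if_neg (by omega)
    have ht := sum_fin_truncate n 1 (fun k => ∑ rA ∈ Finset.range (2+1), ∑ sA ∈ Finset.range (0+1),
        if rA + sA ≤ 2 ∧ sA + k ≤ 0 then g k rA sA * g (n - k) (2 - rA - sA) (0 - sA - k) else 0) hz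
    have hseq : g (n+1) 2 0 = g n 2 0 := by
      rw [master_g, ht]
      simp [Finset.sum_range_succ, gv000, gv100, gv200, gv300, gv0_10, gv0_20, gv0_30, gv0_01, gv0_11, gv0_02, gv0_12, gv0_21, gv0_03, gv1_10, gv1_01, gv1_20, gv2_10]
    rw [hseq]
    simp only [map_add, PowerSeries.coeff_X_pow_mul', mkg, PowerSeries.coeff_mk]
    try push_cast
    try ring

lemma Bg30 : mkg 3 0 = PowerSeries.C (R := ℤ) 0 + PowerSeries.X * (mkg 3 0) := by
  apply ps_succ_helper
  · simp [mkg, gv000, gv100, gv200, gv300, gv0_10, gv0_20, gv0_30, gv0_01, gv0_11, gv0_02, gv0_12, gv0_21, gv0_03, gv1_10, gv1_01, gv1_20, gv2_10]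
  · intro n
    have hL : PowerSeries.coeff (R := ℤ) (n+1) (mkg 3 0) = ((g (n+1) 3 0 : ℕ) : ℤ) := by
      rw [mkg, PowerSeries.coeff_mk]
    rw [hL]
    have hz : ∀ k, 1 ≤ k → (∑ rA ∈ Finset.range (3+1), ∑ sA ∈ Finset.range (0+1),
        if rA + sA ≤ 3 ∧ sA + k ≤ 0 then g k rA sA * g (n - k) (3 - rA - sA) (0 - sA - k) else 0) = 0 :=
      fun k hk => Finset.sum_eq_zero fun rA _ => Finset.sum_eq_zero fun sA _ => if_neg (by omega)
    have ht := sum_fin_truncate n 1 (fun k => ∑ rA ∈ Finset.range (3+1), ∑ sA ∈ Finset.range (0+1),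
        if rA + sA ≤ 3 ∧ sA + k ≤ 0 then g k rA sA * g (n - k) (3 - rA - sA) (0 - sA - k) else 0) hz
    have hseq : g (n+1) 3 0 = g n 3 0 := by
      rw [master_g, ht]
      simp [Finset.sum_range_succ, gv000, gv100, gv200, gv300, gv0_10, gv0_20, gv0_30, gv0_01, gv0_11, gv0_02, gv0_12, gv0_21, gv0_03, gv1_10, gv1_01, gv1_20, gv2_10]
    rw [hseq]
    simp only [map_add, PowerSeries.coeff_X_pow_mul', mkg, PowerSeries.coeff_mk]
    try push_cast
    try ring

lemma Bg01 : mkg 0 1 = PowerSeries.C (R := ℤ) 0 + PowerSeries.X * (mkg 0 1 + PowerSeries.X ^ 1 * mkg 0 0) := by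
  apply ps_succ_helper
  · simp [mkg, gv000, gv100, gv200, gv300, gv0_10, gv0_20, gv0_30, gv0_01, gv0_11, gv0_02, gv0_12, gv0_21, gv0_03, gv1_10, gv1_01, gv1_20, gv2_10]
  · intro n
    have hL : PowerSeries.coeff (R := ℤ) (n+1) (mkg 0 1) = ((g (n+1) 0 1 : ℕ) : ℤ) := by
      rw [mkg, PowerSeries.coeff_mk]
    rw [hL]
    have hz : ∀ k, 2 ≤ k → (∑ rA ∈ Finset.range (0+1), ∑ sA ∈ Finset.range (1+1),
        if rA + sA ≤ 0 ∧ sA + k ≤ 1 then g k rA sA * g (n - k) (0 - rA - sA) (1 - sA - k) else 0) = 0 :=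
      fun k hk => Finset.sum_eq_zero fun rA _ => Finset.sum_eq_zero fun sA _ => if_neg (by omega)
    have ht := sum_fin_truncate n 2 (fun k => ∑ rA ∈ Finset.range (0+1), ∑ sA ∈ Finset.range (1+1),
        if rA + sA ≤ 0 ∧ sA + k ≤ 1 then g k rA sA * g (n - k) (0 - rA - sA) (1 - sA - k) else 0) hz
    have hseq : g (n+1) 0 1 = g n 0 1 + (if 1 ≤ n then g (n-1) 0 0 else 0) := by
      rw [master_g, ht]
      simp [Finset.sum_range_succ, gv000, gv100, gv200, gv300, gv0_10, gv0_20, gv0_30, gv0_01, gv0_11, gv0_02, gv0_12, gv0_21, gv0_03, gv1_10, gv1_01, gv1_20, gv2_10]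
    rw [hseq]
    simp only [map_add, PowerSeries.coeff_X_pow_mul', mkg, PowerSeries.coeff_mk]
    try push_cast
    try ring

lemma Bg11 : mkg 1 1 = PowerSeries.C (R := ℤ) 0 + PowerSeries.X * (mkg 1 1 + PowerSeries.X ^ 1 * mkg 1 0) := by
  apply ps_succ_helper
  · simp [mkg, gv000, gv100, gv200, gv300, gv0_10, gv0_20, gv0_30, gv0_01, gv0_11, gv0_02, gv0_12, gv0_21, gv0_03, gv1_10, gv1_01, gv1_20, gv2_10]
  · intro n
    have hL : PowerSeries.coeff (R := ℤ) (n+1) (mkg 1 1) = ((g (n+1) 1 1 : ℕ) : ℤ) := by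
      rw [mkg, PowerSeries.coeff_mk]
    rw [hL]
    have hz : ∀ k, 2 ≤ k → (∑ rA ∈ Finset.range (1+1), ∑ sA ∈ Finset.range (1+1),
        if rA + sA ≤ 1 ∧ sA + k ≤ 1 then g k rA sA * g (n - k) (1 - rA - sA) (1 - sA - k) else 0) = 0 :=
      fun k hk => Finset.sum_eq_zero fun rA _ => Finset.sum_eq_zero fun sA _ => if_neg (by omega)
    have ht := sum_fin_truncate n 2 (fun k => ∑ rA ∈ Finset.range (1+1), ∑ sA ∈ Finset.range (1+1),
        if rA + sA ≤ 1 ∧ sA + k ≤ 1 then g k rA sA * g (n - k) (1 - rA - sA) (1 - sA - k) else 0) hz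
    have hseq : g (n+1) 1 1 = g n 1 1 + (if 1 ≤ n then g (n-1) 1 0 else 0) := by
      rw [master_g, ht]
      simp [Finset.sum_range_succ, gv000, gv100, gv200, gv300, gv0_10, gv0_20, gv0_30, gv0_01, gv0_11, gv0_02, gv0_12, gv0_21, gv0_03, gv1_10, gv1_01, gv1_20, gv2_10]
    rw [hseq]
    simp only [map_add, PowerSeries.coeff_X_pow_mul', mkg, PowerSeries.coeff_mk]
    try push_cast
    try ring

lemma Bg21 : mkg 2 1 = PowerSeries.C (R := ℤ) 0 + PowerSeries.X * (mkg 2 1 + PowerSeries.X ^ 1 * mkg 2 0) := by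
  apply ps_succ_helper
  · simp [mkg, gv000, gv100, gv200, gv300, gv0_10, gv0_20, gv0_30, gv0_01, gv0_11, gv0_02, gv0_12, gv0_21, gv0_03, gv1_10, gv1_01, gv1_20, gv2_10]
  · intro n
    have hL : PowerSeries.coeff (R := ℤ) (n+1) (mkg 2 1) = ((g (n+1) 2 1 : ℕ) : ℤ) := by
      rw [mkg, PowerSeries.coeff_mk]
    rw [hL]
    have hz : ∀ k, 2 ≤ k → (∑ rA ∈ Finset.range (2+1), ∑ sA ∈ Finset.range (1+1),
        if rA + sA ≤ 2 ∧ sA + k ≤ 1 then g k rA sA * g (n - k) (2 - rA - sA) (1 - sA - k) else 0) = 0 :=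
      fun k hk => Finset.sum_eq_zero fun rA _ => Finset.sum_eq_zero fun sA _ => if_neg (by omega)
    have ht := sum_fin_truncate n 2 (fun k => ∑ rA ∈ Finset.range (2+1), ∑ sA ∈ Finset.range (1+1),
        if rA + sA ≤ 2 ∧ sA + k ≤ 1 then g k rA sA * g (n - k) (2 - rA - sA) (1 - sA - k) else 0) hz
    have hseq : g (n+1) 2 1 = g n 2 1 + (if 1 ≤ n then g (n-1) 2 0 else 0) := by
      rw [master_g, ht]
      simp [Finset.sum_range_succ, gv000, gv100, gv200, gv300, gv0_10, gv0_20, gv0_30, gv0_01, gv0_11, gv0_02, gv0_12, gv0_21, gv0_03, gv1_10, gv1_01, gv1_20, gv2_10]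
    rw [hseq]
    simp only [map_add, PowerSeries.coeff_X_pow_mul', mkg, PowerSeries.coeff_mk]
    try push_cast
    try ring

lemma Bg02 : mkg 0 2 = PowerSeries.C (R := ℤ) 0 + PowerSeries.X * (mkg 0 2 + PowerSeries.X ^ 1 * mkg 0 1 + PowerSeries.X ^ 2 * mkg 0 0) := by
  apply ps_succ_helper
  · simp [mkg, gv000, gv100, gv200, gv300, gv0_10, gv0_20, gv0_30, gv0_01, gv0_11, gv0_02, gv0_12, gv0_21, gv0_03, gv1_10, gv1_01, gv1_20, gv2_10]
  · intro n
    have hL : PowerSeries.coeff (R := ℤ) (n+1) (mkg 0 2) = ((g (n+1) 0 2 : ℕ) : ℤ) := by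
      rw [mkg, PowerSeries.coeff_mk]
    rw [hL]
    have hz : ∀ k, 3 ≤ k → (∑ rA ∈ Finset.range (0+1), ∑ sA ∈ Finset.range (2+1),
        if rA + sA ≤ 0 ∧ sA + k ≤ 2 then g k rA sA * g (n - k) (0 - rA - sA) (2 - sA - k) else 0) = 0 :=
      fun k hk => Finset.sum_eq_zero fun rA _ => Finset.sum_eq_zero fun sA _ => if_neg (by omega)
    have ht := sum_fin_truncate n 3 (fun k => ∑ rA ∈ Finset.range (0+1), ∑ sA ∈ Finset.range (2+1),
        if rA + sA ≤ 0 ∧ sA + k ≤ 2 then g k rA sA * g (n - k) (0 - rA - sA) (2 - sA - k) else 0) hz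
    have hseq : g (n+1) 0 2 = g n 0 2 + (if 1 ≤ n then g (n-1) 0 1 else 0) + (if 2 ≤ n then g (n-2) 0 0 else 0) := by
      rw [master_g, ht]
      simp [Finset.sum_range_succ, gv000, gv100, gv200, gv300, gv0_10, gv0_20, gv0_30, gv0_01, gv0_11, gv0_02, gv0_12, gv0_21, gv0_03, gv1_10, gv1_01, gv1_20, gv2_10]
    rw [hseq]
    simp only [map_add, PowerSeries.coeff_X_pow_mul', mkg, PowerSeries.coeff_mk]
    try push_cast
    try ring

lemma Bg12 : mkg 1 2 = PowerSeries.C (R := ℤ) 0 + PowerSeries.X * (mkg 1 2 + PowerSeries.X ^ 1 * mkg 1 1 + PowerSeries.X ^ 2 * mkg 1 0) := by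
  apply ps_succ_helper
  · simp [mkg, gv000, gv100, gv200, gv300, gv0_10, gv0_20, gv0_30, gv0_01, gv0_11, gv0_02, gv0_12, gv0_21, gv0_03, gv1_10, gv1_01, gv1_20, gv2_10]
  · intro n
    have hL : PowerSeries.coeff (R := ℤ) (n+1) (mkg 1 2) = ((g (n+1) 1 2 : ℕ) : ℤ) := by
      rw [mkg, PowerSeries.coeff_mk]
    rw [hL]
    have hz : ∀ k, 3 ≤ k → (∑ rA ∈ Finset.range (1+1), ∑ sA ∈ Finset.range (2+1),
        if rA + sA ≤ 1 ∧ sA + k ≤ 2 then g k rA sA * g (n - k) (1 - rA - sA) (2 - sA - k) else 0) = 0 :=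
      fun k hk => Finset.sum_eq_zero fun rA _ => Finset.sum_eq_zero fun sA _ => if_neg (by omega)
    have ht := sum_fin_truncate n 3 (fun k => ∑ rA ∈ Finset.range (1+1), ∑ sA ∈ Finset.range (2+1),
        if rA + sA ≤ 1 ∧ sA + k ≤ 2 then g k rA sA * g (n - k) (1 - rA - sA) (2 - sA - k) else 0) hz
    have hseq : g (n+1) 1 2 = g n 1 2 + (if 1 ≤ n then g (n-1) 1 1 else 0) + (if 2 ≤ n then g (n-2) 1 0 else 0) := by
      rw [master_g, ht]
      simp [Finset.sum_range_succ, gv000, gv100, gv200, gv300, gv0_10, gv0_20, gv0_30, gv0_01, gv0_11, gv0_02, gv0_12, gv0_21, gv0_03, gv1_10, gv1_01, gv1_20, gv2_10]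
    rw [hseq]
    simp only [map_add, PowerSeries.coeff_X_pow_mul', mkg, PowerSeries.coeff_mk]
    try push_cast
    try ring

lemma Bg03 : mkg 0 3 = PowerSeries.C (R := ℤ) 0 + PowerSeries.X * (mkg 0 3 + PowerSeries.X ^ 1 * mkg 0 2 + PowerSeries.X ^ 2 * mkg 0 1 + PowerSeries.X ^ 3 * mkg 0 0) := by
  apply ps_succ_helper
  · simp [mkg, gv000, gv100, gv200, gv300, gv0_10, gv0_20, gv0_30, gv0_01, gv0_11, gv0_02, gv0_12, gv0_21, gv0_03, gv1_10, gv1_01, gv1_20, gv2_10]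
  · intro n
    have hL : PowerSeries.coeff (R := ℤ) (n+1) (mkg 0 3) = ((g (n+1) 0 3 : ℕ) : ℤ) := by
      rw [mkg, PowerSeries.coeff_mk]
    rw [hL]
    have hz : ∀ k, 4 ≤ k → (∑ rA ∈ Finset.range (0+1), ∑ sA ∈ Finset.range (3+1),
        if rA + sA ≤ 0 ∧ sA + k ≤ 3 then g k rA sA * g (n - k) (0 - rA - sA) (3 - sA - k) else 0) = 0 :=
      fun k hk => Finset.sum_eq_zero fun rA _ => Finset.sum_eq_zero fun sA _ => if_neg (by omega)
    have ht := sum_fin_truncate n 4 (fun k => ∑ rA ∈ Finset.range (0+1), ∑ sA ∈ Finset.range (3+1),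
        if rA + sA ≤ 0 ∧ sA + k ≤ 3 then g k rA sA * g (n - k) (0 - rA - sA) (3 - sA - k) else 0) hz
    have hseq : g (n+1) 0 3 = g n 0 3 + (if 1 ≤ n then g (n-1) 0 2 else 0) + (if 2 ≤ n then g (n-2) 0 1 else 0) + (if 3 ≤ n then g (n-3) 0 0 else 0) := by
      rw [master_g, ht]
      simp [Finset.sum_range_succ, gv000, gv100, gv200, gv300, gv0_10, gv0_20, gv0_30, gv0_01, gv0_11, gv0_02, gv0_12, gv0_21, gv0_03, gv1_10, gv1_01, gv1_20, gv2_10]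
    rw [hseq]
    simp only [map_add, PowerSeries.coeff_X_pow_mul', mkg, PowerSeries.coeff_mk]
    try push_cast
    try ring

lemma Bf0 : mkf 0 = PowerSeries.C (R := ℤ) 1 + PowerSeries.X * (mkg 0 0 * mkf 0) := by
  apply ps_succ_helper
  · simp [mkf, fcv0, fcv1, fcv2, fcv3]
  · intro n
    have hL : PowerSeries.coeff (R := ℤ) (n+1) (mkf 0) = ((fc 0 (n+1) : ℕ) : ℤ) := by
      rw [mkf, PowerSeries.coeff_mk]
    rw [hL]
    have hrange := Fin.sum_univ_eq_sum_range (fun k => ∑ rA ∈ Finset.range (0+1), ∑ sA ∈ Finset.range (0+1),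
      if rA + sA ≤ 0 then g k rA sA * fc (0 - rA - sA) (n - k) else 0) (n+1)
    have hseq : fc 0 (n+1) = (∑ k ∈ Finset.range (n+1), g k 0 0 * fc 0 (n - k)) := by
      rw [master_f, hrange]
      apply Finset.sum_congr rfl
      intro k _
      simp [Finset.sum_range_succ]
      try ring
    rw [hseq, coeff_conv]

lemma Bf1 : mkf 1 = PowerSeries.C (R := ℤ) 0 + PowerSeries.X * (mkg 0 0 * mkf 1 + mkg 0 1 * mkf 0 + mkg 1 0 * mkf 0) := by
  apply ps_succ_helper
  · simp [mkf, fcv0, fcv1, fcv2, fcv3]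
  · intro n
    have hL : PowerSeries.coeff (R := ℤ) (n+1) (mkf 1) = ((fc 1 (n+1) : ℕ) : ℤ) := by
      rw [mkf, PowerSeries.coeff_mk]
    rw [hL]
    have hrange := Fin.sum_univ_eq_sum_range (fun k => ∑ rA ∈ Finset.range (1+1), ∑ sA ∈ Finset.range (1+1),
      if rA + sA ≤ 1 then g k rA sA * fc (1 - rA - sA) (n - k) else 0) (n+1)
    have hseq : fc 1 (n+1) = (∑ k ∈ Finset.range (n+1), g k 0 0 * fc 1 (n - k)) + (∑ k ∈ Finset.range (n+1), g k 0 1 * fc 0 (n - k)) + (∑ k ∈ Finset.range (n+1), g k 1 0 * fc 0 (n - k)) := by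
      rw [master_f, hrange]
      rw [← Finset.sum_add_distrib]
      rw [← Finset.sum_add_distrib]
      apply Finset.sum_congr rfl
      intro k _
      simp [Finset.sum_range_succ]
      try ring
    rw [hseq]
    simp only [map_add, coeff_conv]
    try push_cast
    ring

lemma Bf2 : mkf 2 = PowerSeries.C (R := ℤ) 0 + PowerSeries.X * (mkg 0 0 * mkf 2 + mkg 0 1 * mkf 1 + mkg 0 2 * mkf 0 + mkg 1 0 * mkf 1 + mkg 1 1 * mkf 0 + mkg 2 0 * mkf 0) := by
  apply ps_succ_helper
  · simp [mkf, fcv0, fcv1, fcv2, fcv3]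
  · intro n
    have hL : PowerSeries.coeff (R := ℤ) (n+1) (mkf 2) = ((fc 2 (n+1) : ℕ) : ℤ) := by
      rw [mkf, PowerSeries.coeff_mk]
    rw [hL]
    have hrange := Fin.sum_univ_eq_sum_range (fun k => ∑ rA ∈ Finset.range (2+1), ∑ sA ∈ Finset.range (2+1),
      if rA + sA ≤ 2 then g k rA sA * fc (2 - rA - sA) (n - k) else 0) (n+1)
    have hseq : fc 2 (n+1) = (∑ k ∈ Finset.range (n+1), g k 0 0 * fc 2 (n - k)) + (∑ k ∈ Finset.range (n+1), g k 0 1 * fc 1 (n - k)) + (∑ k ∈ Finset.range (n+1), g k 0 2 * fc 0 (n - k)) + (∑ k ∈ Finset.range (n+1), g k 1 0 * fc 1 (n - k)) + (∑ k ∈ Finset.range (n+1), g k 1 1 * fc 0 (n - k)) + (∑ k ∈ Finset.range (n+1), g k 2 0 * fc 0 (n - k)) := by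
      rw [master_f, hrange]
      rw [← Finset.sum_add_distrib]
      rw [← Finset.sum_add_distrib]
      rw [← Finset.sum_add_distrib]
      rw [← Finset.sum_add_distrib]
      rw [← Finset.sum_add_distrib]
      apply Finset.sum_congr rfl
      intro k _
      simp [Finset.sum_range_succ]
      try ring
    rw [hseq]
    simp only [map_add, coeff_conv]
    try push_cast
    ring

lemma Bf3 : mkf 3 = PowerSeries.C (R := ℤ) 0 + PowerSeries.X * (mkg 0 0 * mkf 3 + mkg 0 1 * mkf 2 + mkg 0 2 * mkf 1 + mkg 0 3 * mkf 0 + mkg 1 0 * mkf 2 + mkg 1 1 * mkf 1 + mkg 1 2 * mkf 0 + mkg 2 0 * mkf 1 + mkg 2 1 * mkf 0 + mkg 3 0 * mkf 0) := by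
  apply ps_succ_helper
  · simp [mkf, fcv0, fcv1, fcv2, fcv3]
  · intro n
    have hL : PowerSeries.coeff (R := ℤ) (n+1) (mkf 3) = ((fc 3 (n+1) : ℕ) : ℤ) := by
      rw [mkf, PowerSeries.coeff_mk]
    rw [hL]
    have hrange := Fin.sum_univ_eq_sum_range (fun k => ∑ rA ∈ Finset.range (3+1), ∑ sA ∈ Finset.range (3+1),
      if rA + sA ≤ 3 then g k rA sA * fc (3 - rA - sA) (n - k) else 0) (n+1)
    have hseq : fc 3 (n+1) = (∑ k ∈ Finset.range (n+1), g k 0 0 * fc 3 (n - k)) + (∑ k ∈ Finset.range (n+1), g k 0 1 * fc 2 (n - k)) + (∑ k ∈ Finset.range (n+1), g k 0 2 * fc 1 (n - k)) + (∑ k ∈ Finset.range (n+1), g k 0 3 * fc 0 (n - k)) + (∑ k ∈ Finset.range (n+1), g k 1 0 * fc 2 (n - k)) + (∑ k ∈ Finset.range (n+1), g k 1 1 * fc 1 (n - k)) + (∑ k ∈ Finset.range (n+1), g k 1 2 * fc 0 (n - k)) + (∑ k ∈ Finset.range (n+1), g k 2 0 * fc 1 (n - k)) + (∑ k ∈ Finset.range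 (n+1), g k 2 1 * fc 0 (n - k)) + (∑ k ∈ Finset.range (n+1), g k 3 0 * fc 0 (n - k)) := by
      rw [master_f, hrange]
      rw [← Finset.sum_add_distrib]
      rw [← Finset.sum_add_distrib]
      rw [← Finset.sum_add_distrib]
      rw [← Finset.sum_add_distrib]
      rw [← Finset.sum_add_distrib]
      rw [← Finset.sum_add_distrib]
      rw [← Finset.sum_add_distrib]
      rw [← Finset.sum_add_distrib]
      rw [← Finset.sum_add_distrib]
      apply Finset.sum_congr rfl
      intro k _
      simp [Finset.sum_range_succ]
      try ring
    rw [hseq]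
    simp only [map_add, coeff_conv]
    try push_cast
    ring

section FinalAlgebra
open PowerSeries

local notation "XX" => (PowerSeries.X : PowerSeries ℤ)

lemma one_sub_X_ne : (1 - XX) ≠ 0 := by
  intro h
  have h2 := congrArg (PowerSeries.constantCoeff (R := ℤ)) h
  simp at h2

lemma cancel_pow {a b : PowerSeries ℤ} (k : ℕ)
    (h : (1 - XX)^k * a = (1 - XX)^k * b) : a = b :=
  mul_left_cancel₀ (pow_ne_zero k one_sub_X_ne) h

lemma b00' : mkg 0 0 = 1 + XX * mkg 0 0 := by simpa using Bg00
lemma b10' : mkg 1 0 = XX * mkg 1 0 := by simpa using Bg10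
lemma b20' : mkg 2 0 = XX * mkg 2 0 := by simpa using Bg20
lemma b30' : mkg 3 0 = XX * mkg 3 0 := by simpa using Bg30
lemma b01' : mkg 0 1 = XX * (mkg 0 1 + XX^1 * mkg 0 0) := by simpa using Bg01
lemma b11' : mkg 1 1 = XX * (mkg 1 1 + XX^1 * mkg 1 0) := by simpa using Bg11
lemma b21' : mkg 2 1 = XX * (mkg 2 1 + XX^1 * mkg 2 0) := by simpa using Bg21
lemma b02' : mkg 0 2 = XX * (mkg 0 2 + XX^1 * mkg 0 1 + XX^2 * mkg 0 0) := by simpa using Bg02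
lemma b12' : mkg 1 2 = XX * (mkg 1 2 + XX^1 * mkg 1 1 + XX^2 * mkg 1 0) := by simpa using Bg12
lemma b03' : mkg 0 3 = XX * (mkg 0 3 + XX^1 * mkg 0 2 + XX^2 * mkg 0 1 + XX^3 * mkg 0 0) := by
  simpa using Bg03
lemma bf0' : mkf 0 = 1 + XX * (mkg 0 0 * mkf 0) := by simpa using Bf0
lemma bf1' : mkf 1 = XX * (mkg 0 0 * mkf 1 + mkg 0 1 * mkf 0 + mkg 1 0 * mkf 0) := by
  simpa using Bf1
lemma bf2' : mkf 2 = XX * (mkg 0 0 * mkf 2 + mkg 0 1 * mkf 1 + mkg 0 2 * mkf 0 +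
    mkg 1 0 * mkf 1 + mkg 1 1 * mkf 0 + mkg 2 0 * mkf 0) := by simpa using Bf2
lemma bf3' : mkf 3 = XX * (mkg 0 0 * mkf 3 + mkg 0 1 * mkf 2 + mkg 0 2 * mkf 1 +
    mkg 0 3 * mkf 0 + mkg 1 0 * mkf 2 + mkg 1 1 * mkf 1 + mkg 1 2 * mkf 0 +
    mkg 2 0 * mkf 1 + mkg 2 1 * mkf 0 + mkg 3 0 * mkf 0) := by simpa using Bf3

lemma c00 : (1 - XX) * mkg 0 0 = 1 := by linear_combination b00'
lemma c10 : (1 - XX) * mkg 1 0 = 0 := by linear_combination b10'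
lemma c20 : (1 - XX) * mkg 2 0 = 0 := by linear_combination b20'
lemma c30 : (1 - XX) * mkg 3 0 = 0 := by linear_combination b30'
lemma d01 : (1 - XX)^2 * mkg 0 1 = XX^2 := by
  linear_combination (1 - XX) * b01' + XX^2 * c00
lemma d11 : (1 - XX)^2 * mkg 1 1 = 0 := by
  linear_combination (1 - XX) * b11' + XX^2 * c10
lemma d21 : (1 - XX)^2 * mkg 2 1 = 0 := by
  linear_combination (1 - XX) * b21' + XX^2 * c20
lemma d02 : (1 - XX)^3 * mkg 0 2 = XX^3 := by
  linear_combination (1 - XX)^2 * b02' + XX^2 * d01 + XX^3 * (1 - XX) * c00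
lemma d12 : (1 - XX)^3 * mkg 1 2 = 0 := by
  linear_combination (1 - XX)^2 * b12' + XX^2 * d11 + XX^3 * (1 - XX) * c10
lemma d03 : (1 - XX)^4 * mkg 0 3 = XX^4 := by
  linear_combination (1 - XX)^3 * b03' + XX^2 * d02 + XX^3 * (1 - XX) * d01 +
    XX^4 * (1 - XX)^2 * c00
lemma e0 : (1 - 2*XX) * mkf 0 = 1 - XX := by
  linear_combination (1 - XX) * bf0' + XX * mkf 0 * c00
lemma e1 : (1 - 2*XX) * mkf 1 = XX * (1 - XX) * (mkg 0 1 + mkg 1 0) * mkf 0 := by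
  linear_combination (1 - XX) * bf1' + XX * mkf 1 * c00
lemma e2 : (1 - 2*XX) * mkf 2 = XX * (1 - XX) * ((mkg 0 1 + mkg 1 0) * mkf 1 +
    (mkg 0 2 + mkg 1 1 + mkg 2 0) * mkf 0) := by
  linear_combination (1 - XX) * bf2' + XX * mkf 2 * c00
lemma e3 : (1 - 2*XX) * mkf 3 = XX * (1 - XX) * ((mkg 0 1 + mkg 1 0) * mkf 2 +
    (mkg 0 2 + mkg 1 1 + mkg 2 0) * mkf 1 +
    (mkg 0 3 + mkg 1 2 + mkg 2 1 + mkg 3 0) * mkf 0) := by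
  linear_combination (1 - XX) * bf3' + XX * mkf 3 * c00

lemma h1 : (1 - 2*XX)^2 * mkf 1 = XX^3 := by
  apply cancel_pow 2
  linear_combination (1 - XX)^2 * (1 - 2*XX) * e1 +
    XX * (1 - XX)^3 * (mkg 0 1 + mkg 1 0) * e0 + XX * (1 - XX)^2 * d01 +
    XX * (1 - XX)^3 * c10

lemma h2 : (1 - 2*XX)^3 * mkf 2 = XX^4 * (1 - XX) := by
  apply cancel_pow 3
  linear_combination (1 - XX)^3 * (1 - 2*XX)^2 * e2 +
    XX * (1 - XX)^4 * (mkg 0 1 + mkg 1 0) * h1 +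
    XX * (1 - XX)^4 * (1 - 2*XX) * (mkg 0 2 + mkg 1 1 + mkg 2 0) * e0 +
    XX^4 * (1 - XX)^2 * d01 + XX^4 * (1 - XX)^3 * c10 +
    XX * (1 - XX)^2 * (1 - 2*XX) * d02 + XX * (1 - XX)^3 * (1 - 2*XX) * d11 +
    XX * (1 - XX)^4 * (1 - 2*XX) * c20

lemma h3 : (1 - 2*XX)^4 * mkf 3 = XX^5 * (1 - XX)^2 := by
  apply cancel_pow 3
  linear_combination (1 - XX)^3 * (1 - 2*XX)^3 * e3 +
    XX * (1 - XX)^4 * (mkg 0 1 + mkg 1 0) * h2 +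
    XX^5 * (1 - XX)^3 * d01 + XX^5 * (1 - XX)^4 * c10 +
    XX * (1 - XX)^4 * (1 - 2*XX) * (mkg 0 2 + mkg 1 1 + mkg 2 0) * h1 +
    XX^4 * (1 - XX) * (1 - 2*XX) * d02 + XX^4 * (1 - XX)^2 * (1 - 2*XX) * d11 +
    XX^4 * (1 - XX)^3 * (1 - 2*XX) * c20 +
    XX * (1 - XX)^4 * (1 - 2*XX)^2 * (mkg 0 3 + mkg 1 2 + mkg 2 1 + mkg 3 0) * e0 +
    XX * (1 - XX) * (1 - 2*XX)^2 * d03 + XX * (1 - XX)^2 * (1 - 2*XX)^2 * d12 +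
    XX * (1 - XX)^3 * (1 - 2*XX)^2 * d21 + XX * (1 - XX)^4 * (1 - 2*XX)^2 * c30

end FinalAlgebra

lemma f_eq_fc (r n : ℕ) : f r n = fc r n := by
  rw [f, Nat.card_eq_fintype_card, Fintype.card_subtype, fc]

/-- In `ℤ[[z]]`, `(1-2z)⁴·Σ_{n≥0} f₃(n) zⁿ = z⁵·(1-z)²`; that is,
`Σ_{n≥0} f₃(n) zⁿ = (1-z)²z⁵/(1-2z)⁴`. -/
theorem stmt18 :
    (1 - 2 * PowerSeries.X) ^ 4 * PowerSeries.mk (fun n => (f 3 n : ℤ)) =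
      PowerSeries.X ^ 5 * (1 - PowerSeries.X) ^ 2 := by
  have hmk : PowerSeries.mk (fun n => (f 3 n : ℤ)) = mkf 3 := by
    rw [mkf]
    exact congrArg PowerSeries.mk (funext fun n => by rw [f_eq_fc])
  rw [hmk]
  exact h3
end
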